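/- arXiv:1612.08670 — 8 statements merged into one kernel-verified Lean document; each statement's English description precedes it below -/
import Mathlib

section
/- Let (a,b) be a pair of integers with -n ≤ a, b < n, and let v ∈ S_{2n+1} satisfy v(-i) = -v(i) for all i. Then (a,b) satisfies the corner conditions v⁻¹(a) > b, v(b) > a, v⁻¹(a+1) ≤ b, and v(b+1) ≤ a if and only if (-a-1, -b-1) satisfies the same four conditions. -/
/-- A permutation of `ℤ` is a signed permutation if it is odd: `w(-i) = -w(i)`. -/
def IsSigned (w : Equiv.Perm ℤ) : Prop := ∀ i : ℤ, w (-i) = -(w i)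

/-- `w` fixes every integer `m` with `|m| > N` (i.e. `w` lies in `W_N`, resp. `S` supported there). -/
def FixesBeyond (N : ℤ) (w : Equiv.Perm ℤ) : Prop := ∀ m : ℤ, N < |m| → w m = m

/-- Word length of `g` with respect to a generating set `S`. -/
noncomputable def wlen (S : Set (Equiv.Perm ℤ)) (g : Equiv.Perm ℤ) : ℕ :=
  sInf {m | ∃ l : List (Equiv.Perm ℤ), l.length = m ∧ (∀ x ∈ l, x ∈ S) ∧ l.prod = g}

/-- Bruhat order for the group generated by `S`: the reflexive-transitive closure of
multiplying on the right by a reflection (a conjugate, by an element of the generated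
subgroup, of a generator) while increasing the word length. -/
def bruhatLe (S : Set (Equiv.Perm ℤ)) (u v : Equiv.Perm ℤ) : Prop :=
  Relation.ReflTransGen
    (fun x y => (∃ g ∈ Subgroup.closure S, ∃ s ∈ S, y = x * (g * s * g⁻¹)) ∧
      wlen S x < wlen S y) u v

/-- The simple generators of the type B Weyl group `W_n`, as permutations of `ℤ`. -/
def BGens (n : ℤ) : Set (Equiv.Perm ℤ) :=
  {Equiv.swap 1 (-1)} ∪
    {x | ∃ i : ℤ, 1 ≤ i ∧ i < n ∧ x = Equiv.swap i (i + 1) * Equiv.swap (-i) (-(i + 1))}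

/-- The simple generators of the infinite signed permutation group `W_∞`. -/
def BGensInf : Set (Equiv.Perm ℤ) :=
  {Equiv.swap 1 (-1)} ∪
    {x | ∃ i : ℤ, 1 ≤ i ∧ x = Equiv.swap i (i + 1) * Equiv.swap (-i) (-(i + 1))}

/-- Adjacent transpositions `(i, i+1)` for `a ≤ i < b`: simple generators of the symmetric
group on `{a, ..., b}`. -/
def AGens (a b : ℤ) : Set (Equiv.Perm ℤ) :=
  {x | ∃ i : ℤ, a ≤ i ∧ i < b ∧ x = Equiv.swap i (i + 1)}

/-- The length of a signed permutation in `W_n`, by the inversion-count formula. -/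
noncomputable def lenCount (n : ℤ) (w : Equiv.Perm ℤ) : ℕ :=
  {x : ℤ × ℤ | 0 < x.1 ∧ x.1 < x.2 ∧ x.2 ≤ n ∧ w x.2 < w x.1}.ncard +
  {x : ℤ × ℤ | 0 < x.1 ∧ x.1 ≤ x.2 ∧ x.2 ≤ n ∧ w x.1 + w x.2 < 0}.ncard

/-- The length of a signed permutation in `W_∞`, by the inversion-count formula. -/
noncomputable def lenCountInf (w : Equiv.Perm ℤ) : ℕ :=
  {x : ℤ × ℤ | 0 < x.1 ∧ x.1 < x.2 ∧ w x.2 < w x.1}.ncard +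
  {x : ℤ × ℤ | 0 < x.1 ∧ x.1 ≤ x.2 ∧ w x.1 + w x.2 < 0}.ncard

/-- Type B rank function `r_w(p,q) = #{i ≥ p : w(i) ≤ -q}`. -/
noncomputable def rB (p q : ℤ) (w : Equiv.Perm ℤ) : ℤ :=
  ({i : ℤ | p ≤ i ∧ w i ≤ -q}.ncard : ℤ)

/-- Type B rank function with the bound `i ≤ n`: `r_w(p,q) = #{p ≤ i ≤ n : w(i) ≤ -q}`. -/
noncomputable def rBn (n p q : ℤ) (w : Equiv.Perm ℤ) : ℤ :=
  ({i : ℤ | p ≤ i ∧ i ≤ n ∧ w i ≤ -q}.ncard : ℤ)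

/-- Type A rank function `r_v(p,q) = #{1 ≤ i ≤ p : v(i) > q}`. -/
noncomputable def rA (p q : ℤ) (v : Equiv.Perm ℤ) : ℤ :=
  ({i : ℤ | 1 ≤ i ∧ i ≤ p ∧ q < v i}.ncard : ℤ)

/-- Rank function `r_v(p,q) = #{i ≤ -p : v(i) ≥ q}` (for permutations of `{-n,...,n}`). -/
noncomputable def rAneg (p q : ℤ) (v : Equiv.Perm ℤ) : ℤ :=
  ({i : ℤ | i ≤ -p ∧ q ≤ v i}.ncard : ℤ)

/-- A type B basic triple. -/
def BasicB (k p q : ℤ) : Prop :=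
  0 < k ∧ 1 - p - q < k ∧ 0 < p ∧ q ≠ 0 ∧ (p = 1 → 0 < q)

/-- The basic (bigrassmannian) permutation `v(k,p,q)` of type A, with one-line notation
`1, ..., p-k, q+1, ..., q+k, p-k+1, ..., q`, as a function on `ℤ`. -/
def vAfun (k p q i : ℤ) : ℤ :=
  if i ≤ p - k then i else if i ≤ p then q + (i - (p - k))
  else if i ≤ q + k then i - k else i

/-- `w0` is the minimum, in Bruhat order on `W_∞`, among signed permutations `w`
with `r_w(p,q) ≥ k`: i.e. the basic signed permutation `w(k,p,q)`. -/
def IsMinB (k p q : ℤ) (w0 : Equiv.Perm ℤ) : Prop :=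
  IsSigned w0 ∧ (∃ N : ℤ, FixesBeyond N w0) ∧ k ≤ rB p q w0 ∧
    ∀ w : Equiv.Perm ℤ, IsSigned w → (∃ N : ℤ, FixesBeyond N w) → k ≤ rB p q w →
      bruhatLe BGensInf w0 w

theorem stmt5 (n : ℕ) (v : Equiv.Perm ℤ) (h1 : IsSigned v) (h2 : FixesBeyond n v)
    (a b : ℤ) (ha1 : -(n : ℤ) ≤ a) (ha2 : a < n) (hb1 : -(n : ℤ) ≤ b) (hb2 : b < n) :
    (b < v⁻¹ a ∧ a < v b ∧ v⁻¹ (a + 1) ≤ b ∧ v (b + 1) ≤ a) ↔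
      (-b - 1 < v⁻¹ (-a - 1) ∧ -a - 1 < v (-b - 1) ∧
        v⁻¹ (-a - 1 + 1) ≤ -b - 1 ∧ v (-b - 1 + 1) ≤ -a - 1) := by
  have h1' : ∀ i : ℤ, v⁻¹ (-i) = -(v⁻¹ i) := by
    intro i
    have := h1 (v⁻¹ i)
    rw [show v (v⁻¹ i) = i from v.apply_symm_apply i] at this
    rw [← this, show v⁻¹ (v (-(v⁻¹ i))) = -(v⁻¹ i) from v.symm_apply_apply _]
  have e1 : v⁻¹ (-a - 1) = -(v⁻¹ (a + 1)) := by rw [show -a - 1 = -(a+1) by ring, h1']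
  have e2 : v (-b - 1) = -(v (b + 1)) := by rw [show -b - 1 = -(b+1) by ring, h1]
  have e3 : v⁻¹ (-a - 1 + 1) = -(v⁻¹ a) := by rw [show -a - 1 + 1 = -a by ring, h1']
  have e4 : v (-b - 1 + 1) = -(v b) := by rw [show -b - 1 + 1 = -b by ring, h1]
  rw [e1, e2, e3, e4]
  omega
end

section
/- The number of boxes in the diagram D(w) of a signed permutation w ∈ W_n equals the length ℓ(w). Equivalently, #{(i,j) : -n ≤ i ≤ n, -n ≤ j ≤ -1, w⁻¹(i) > j, w(j) > i, and i ≠ -w(m) for all m ≤ j} = ℓ(w). -/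
theorem stmt7 (n : ℕ) (w : Equiv.Perm ℤ) (h1 : IsSigned w) (h2 : FixesBeyond n w) :
    {x : ℤ × ℤ | -(n : ℤ) ≤ x.1 ∧ x.1 ≤ n ∧ -(n : ℤ) ≤ x.2 ∧ x.2 ≤ -1 ∧
        x.2 < w⁻¹ x.1 ∧ x.1 < w x.2 ∧ ∀ m : ℤ, m ≤ x.2 → x.1 ≠ -(w m)}.ncard
      = lenCount n w := by
  classical
  have hw0 : w 0 = 0 := by have := h1 0; simp only [neg_zero] at this; omega
  have hbd : ∀ a : ℤ, -(n:ℤ) ≤ a → a ≤ n → -(n:ℤ) ≤ w a ∧ w a ≤ n := by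
    intro a ha1 ha2
    by_contra hc
    have habs : (n:ℤ) < |w a| := by rcases abs_cases (w a) with ⟨h,_⟩|⟨h,_⟩ <;> omega
    have h3 := h2 (w a) habs
    have h4 : w a = a := w.injective h3
    rw [h4] at habs
    rcases abs_cases a with ⟨h,_⟩|⟨h,_⟩ <;> omega
  -- The target set, re-expressed as an image
  set T : Set (ℤ × ℤ) := {x | -x.2 < x.1 ∧ x.1 < x.2 ∧ x.2 ≤ (n:ℤ) ∧ w x.1 + w x.2 < 0}
    with hTdef
  have himg : {x : ℤ × ℤ | -(n : ℤ) ≤ x.1 ∧ x.1 ≤ n ∧ -(n : ℤ) ≤ x.2 ∧ x.2 ≤ -1 ∧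
        x.2 < w⁻¹ x.1 ∧ x.1 < w x.2 ∧ ∀ m : ℤ, m ≤ x.2 → x.1 ≠ -(w m)}
      = (fun p : ℤ × ℤ => (w p.1, -p.2)) '' T := by
    ext ⟨i, j⟩
    simp only [Set.mem_setOf_eq, Set.mem_image, hTdef, Prod.mk.injEq]
    constructor
    · rintro ⟨hi1, hi2, hj1, hj2, hji, hij, hall⟩
      refine ⟨(w⁻¹ i, -j), ⟨?_, ?_, ?_, ?_⟩, ?_, ?_⟩
      · show -(-j) < w⁻¹ i
        omega
      · show (w⁻¹ i : ℤ) < -j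
        by_contra hcon
        push_neg at hcon
        have hm : -(w⁻¹ i : ℤ) ≤ j := by omega
        have := hall (-(w⁻¹ i)) hm
        apply this
        rw [h1 (w⁻¹ i)]
        simp
      · show -j ≤ (n:ℤ)
        omega
      · show w (w⁻¹ i) + w (-j) < 0
        have e1 : w (w⁻¹ i) = i := w.apply_symm_apply i
        have e2 : w (-j) = -(w j) := h1 j
        omega
      · exact w.apply_symm_apply i
      · omega
    · rintro ⟨⟨a, b⟩, hmem, hwi, hwj⟩
      have hT1 : -b < a := hmem.1
      have hT2 : a < b := hmem.2.1
      have hT3 : b ≤ (n:ℤ) := hmem.2.2.1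
      have hT4 : w a + w b < 0 := hmem.2.2.2
      have hwi' : w a = i := hwi
      have hwj' : -b = j := hwj
      have hb0 : 0 < b := by omega
      have hwa := hbd a (by omega) (by omega)
      have hwb : w (-b) = -(w b) := h1 b
      refine ⟨by omega, by omega, by omega, by omega, ?_, ?_, ?_⟩
      · rw [← hwi', show w⁻¹ (w a) = a from w.symm_apply_apply a]; omega
      · rw [← hwj', ← hwi', hwb]; omega
      · intro m hm hne
        rw [← hwi', ← h1 m] at hne
        have : a = -m := w.injective hne
        omega
  rw [himg]
  have hinj : Function.Injective (fun p : ℤ × ℤ => (w p.1, -p.2)) := by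
    intro p q h
    simp only [Prod.mk.injEq] at h
    have := w.injective h.1
    exact Prod.ext this (by omega)
  rw [Set.ncard_image_of_injective T hinj]
  -- split T
  have hTfin : T.Finite := by
    apply Set.Finite.subset ((Set.finite_Icc (-(n:ℤ)) n).prod (Set.finite_Icc (-(n:ℤ)) n))
    rintro ⟨a, b⟩ hmem
    have hT1 : -b < a := hmem.1
    have hT2 : a < b := hmem.2.1
    have hT3 : b ≤ (n:ℤ) := hmem.2.2.1
    constructor <;> simp only [Set.mem_Icc] <;> constructor <;> omega
  set Tneg : Set (ℤ × ℤ) := T ∩ {x | x.1 < 0} with hTnegdef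
  set Tpos : Set (ℤ × ℤ) := T ∩ {x | 0 ≤ x.1} with hTposdef
  have hsplit : T = Tneg ∪ Tpos := by
    ext x
    simp only [hTnegdef, hTposdef, Set.mem_union, Set.mem_inter_iff, Set.mem_setOf_eq]
    rcases lt_or_ge x.1 0 with h | h <;> tauto
  have hdisj : Disjoint Tneg Tpos := by
    rw [Set.disjoint_left]
    rintro x ⟨_, hx1⟩ ⟨_, hx2⟩
    simp only [Set.mem_setOf_eq] at hx1 hx2; omega
  rw [hsplit, Set.ncard_union_eq hdisj (hTfin.subset (by rw [hsplit]; exact Set.subset_union_left))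
    (hTfin.subset (by rw [hsplit]; exact Set.subset_union_right))]
  -- identify Tneg with inversions
  have hneg : Tneg = (fun p : ℤ × ℤ => (-p.1, p.2)) ''
      {x : ℤ × ℤ | 0 < x.1 ∧ x.1 < x.2 ∧ x.2 ≤ (n:ℤ) ∧ w x.2 < w x.1} := by
    ext ⟨a, b⟩
    constructor
    · rintro ⟨hmem, ha'⟩
      have hT1 : -b < a := hmem.1
      have hT2 : a < b := hmem.2.1
      have hT3 : b ≤ (n:ℤ) := hmem.2.2.1
      have hT4 : w a + w b < 0 := hmem.2.2.2
      have ha : a < 0 := ha'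
      refine ⟨(-a, b), ?_, ?_⟩
      · show 0 < -a ∧ -a < b ∧ b ≤ (n:ℤ) ∧ w b < w (-a)
        have hwa : w (-a) = -(w a) := h1 a
        exact ⟨by omega, by omega, hT3, by omega⟩
      · show ((-(-a) : ℤ), b) = (a, b)
        rw [neg_neg]
    · rintro ⟨⟨c, d⟩, hmem, heq⟩
      have hc1 : 0 < c := hmem.1
      have hc2 : c < d := hmem.2.1
      have hc3 : d ≤ (n:ℤ) := hmem.2.2.1
      have hc4 : w d < w c := hmem.2.2.2
      have e1 : -c = a := congrArg Prod.fst heq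
      have e2 : d = b := congrArg Prod.snd heq
      have hwc : w (-c) = -(w c) := h1 c
      constructor
      · show -b < a ∧ a < b ∧ b ≤ (n:ℤ) ∧ w a + w b < 0
        refine ⟨by omega, by omega, by omega, ?_⟩
        rw [← e1, ← e2, hwc]
        omega
      · show a < 0
        omega
  have hinj2 : Function.Injective (fun p : ℤ × ℤ => (-p.1, p.2)) := by
    intro p q h
    simp only [Prod.mk.injEq] at h
    exact Prod.ext (by omega) h.2
  rw [hneg, Set.ncard_image_of_injective _ hinj2]
  -- identify Tpos with negative-sum pairs
  have hpos : Tpos = (fun p : ℤ × ℤ => ((if p.1 = p.2 then 0 else p.1), p.2)) ''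
      {x : ℤ × ℤ | 0 < x.1 ∧ x.1 ≤ x.2 ∧ x.2 ≤ (n:ℤ) ∧ w x.1 + w x.2 < 0} := by
    ext ⟨a, b⟩
    constructor
    · rintro ⟨hmem, ha'⟩
      have hT1 : -b < a := hmem.1
      have hT2 : a < b := hmem.2.1
      have hT3 : b ≤ (n:ℤ) := hmem.2.2.1
      have hT4 : w a + w b < 0 := hmem.2.2.2
      have ha : 0 ≤ a := ha'
      rcases eq_or_lt_of_le ha with heq | hlt
      · refine ⟨(b, b), ?_, ?_⟩
        · show 0 < b ∧ b ≤ b ∧ b ≤ (n:ℤ) ∧ w b + w b < 0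
          have : w a = 0 := by rw [← heq, hw0]
          exact ⟨by omega, le_refl b, hT3, by omega⟩
        · show ((if b = b then 0 else b : ℤ), b) = (a, b)
          rw [if_pos rfl, heq]
      · refine ⟨(a, b), ?_, ?_⟩
        · show 0 < a ∧ a ≤ b ∧ b ≤ (n:ℤ) ∧ w a + w b < 0
          exact ⟨hlt, by omega, hT3, hT4⟩
        · show ((if a = b then 0 else a : ℤ), b) = (a, b)
          rw [if_neg (by omega : a ≠ b)]
    · rintro ⟨⟨c, d⟩, hmem, heq⟩
      have hc1 : 0 < c := hmem.1
      have hc2 : c ≤ d := hmem.2.1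
      have hc3 : d ≤ (n:ℤ) := hmem.2.2.1
      have hc4 : w c + w d < 0 := hmem.2.2.2
      have e1 : (if c = d then 0 else c) = a := congrArg Prod.fst heq
      have e2 : d = b := congrArg Prod.snd heq
      by_cases hcd : c = d
      · rw [if_pos hcd] at e1
        have hwcd : w c = w d := by rw [hcd]
        constructor
        · show -b < a ∧ a < b ∧ b ≤ (n:ℤ) ∧ w a + w b < 0
          refine ⟨by omega, by omega, by omega, ?_⟩
          rw [← e1, ← e2, hw0]
          omega
        · show (0:ℤ) ≤ a
          omega
      · rw [if_neg hcd] at e1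
        have hcd' : c < d := lt_of_le_of_ne hc2 hcd
        constructor
        · show -b < a ∧ a < b ∧ b ≤ (n:ℤ) ∧ w a + w b < 0
          refine ⟨by omega, by omega, by omega, ?_⟩
          rw [← e1, ← e2]
          exact hc4
        · show (0:ℤ) ≤ a
          omega
  have hinj3 : Set.InjOn (fun p : ℤ × ℤ => ((if p.1 = p.2 then 0 else p.1), p.2))
      {x : ℤ × ℤ | 0 < x.1 ∧ x.1 ≤ x.2 ∧ x.2 ≤ (n:ℤ) ∧ w x.1 + w x.2 < 0} := by
    rintro p hp q hq h
    have hp1 : 0 < p.1 := hp.1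
    have hq1 : 0 < q.1 := hq.1
    have h' : ((if p.1 = p.2 then 0 else p.1 : ℤ), p.2)
        = ((if q.1 = q.2 then 0 else q.1 : ℤ), q.2) := h
    rw [Prod.mk.injEq] at h'
    obtain ⟨e1, e2⟩ := h' 
    by_cases hab : p.1 = p.2 <;> by_cases hcd : q.1 = q.2
    · exact Prod.ext (by omega) e2
    · rw [if_pos hab, if_neg hcd] at e1; omega
    · rw [if_neg hab, if_pos hcd] at e1; omega
    · rw [if_neg hab, if_neg hcd] at e1; exact Prod.ext e1 e2
  rw [hpos, Set.ncard_image_of_injOn hinj3]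
  rfl
end

section
/- For a type B basic triple (k,p,q) with q ≥ p > 0, the signed permutation w(k,p,q) given in one-line notation by 1, ..., p-1, -(q+k-1), ..., -(q), p, ..., q-1 (followed by fixed values) has length (p+q-1)k + k(k-1)/2. -/
lemma sum_lin_aux (c a : ℤ) (n : ℕ) :
    (∑ i ∈ Finset.Ico a (a + (n : ℤ)), (c - i)) * 2 = (n : ℤ) * (2*c - 2*a - n + 1) := by
  induction n with
  | zero => simp
  | succ m ih =>
    have h1 : a + ((m : ℤ) + 1) = (a + (m : ℤ)) + 1 := by ring
    have h2 : Finset.Ico a ((a + (m : ℤ)) + 1) = insert (a + (m : ℤ)) (Finset.Ico a (a + (m : ℤ))) := by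
      ext x
      simp only [Finset.mem_Ico, Finset.mem_insert]
      omega
    push_cast
    rw [h1, h2, Finset.sum_insert (by simp)]
    push_cast at ih
    linear_combination ih

theorem stmt8' (k p q : ℤ) (hk : 0 < k) (hp : 0 < p) (hpq : p ≤ q)
    (w : Equiv.Perm ℤ) (h1 : IsSigned w)
    (hw : ∀ i : ℤ, 1 ≤ i →
      w i = if i < p then i else if i < p + k then i - p - (q + k - 1)
            else if i < q + k then i - k else i) :
    (lenCountInf w : ℤ) = (p + q - 1) * k + k * (k - 1) / 2 := by
  set FA : Finset (ℤ × ℤ) := Finset.Ioo 0 p ×ˢ Finset.Ico p (p + k) with hFA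
  set F3 : Finset (ℤ × ℤ) :=
    (Finset.Ico p (p + k)).biUnion (fun i => {i} ×ˢ Finset.Ico i (q + k)) with hF3
  have hF3mem : ∀ x : ℤ × ℤ, x ∈ F3 ↔ p ≤ x.1 ∧ x.1 < p + k ∧ x.1 ≤ x.2 ∧ x.2 < q + k := by
    intro x
    simp only [hF3, Finset.mem_biUnion, Finset.mem_product, Finset.mem_singleton,
      Finset.mem_Ico]
    constructor
    · rintro ⟨i, ⟨hi1, hi2⟩, hx1, hx2, hx3⟩
      omega
    · rintro ⟨h1, h2, h3, h4⟩
      exact ⟨x.1, ⟨h1, h2⟩, rfl, h3, h4⟩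
  have hA : {x : ℤ × ℤ | 0 < x.1 ∧ x.1 < x.2 ∧ w x.2 < w x.1} = ↑FA := by
    ext ⟨i, j⟩
    simp only [Set.mem_setOf_eq, Finset.coe_product, Set.mem_prod, Finset.mem_coe,
      Finset.mem_Ioo, Finset.mem_Ico, hFA]
    constructor
    · rintro ⟨hi, hij, hlt⟩
      rw [hw i (by omega), hw j (by omega)] at hlt
      split_ifs at hlt <;> omega
    · rintro ⟨⟨hi1, hi2⟩, hj1, hj2⟩
      refine ⟨hi1, by omega, ?_⟩
      rw [hw i (by omega), hw j (by omega)]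
      split_ifs <;> omega
  have hB : {x : ℤ × ℤ | 0 < x.1 ∧ x.1 ≤ x.2 ∧ w x.1 + w x.2 < 0} = ↑(FA ∪ F3) := by
    ext ⟨i, j⟩
    simp only [Set.mem_setOf_eq, Finset.coe_union, Set.mem_union, Finset.mem_coe,
      hF3mem (i, j), hFA, Finset.mem_product, Finset.mem_Ioo, Finset.mem_Ico]
    constructor
    · rintro ⟨hi, hij, hlt⟩
      rw [hw i (by omega), hw j (by omega)] at hlt
      split_ifs at hlt <;> omega
    · rintro (⟨⟨hi1, hi2⟩, hj1, hj2⟩ | ⟨h1', h2', h3', h4'⟩) <;>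
      · refine ⟨by omega, by omega, ?_⟩
        rw [hw i (by omega), hw j (by omega)]
        split_ifs <;> omega
  have hdisj : Disjoint FA F3 := by
    rw [Finset.disjoint_left]
    intro x hx hx3
    rw [hF3mem x] at hx3
    simp only [hFA, Finset.mem_product, Finset.mem_Ioo, Finset.mem_Ico] at hx
    omega
  have hcardFA : (FA.card : ℤ) = (p - 1) * k := by
    rw [hFA, Finset.card_product, Int.card_Ioo, Int.card_Ico]
    push_cast
    rw [show ((p - 0 - 1).toNat : ℤ) = p - 1 by omega, show ((p + k - p).toNat : ℤ) = k by omega]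
  have hcardF3 : (F3.card : ℤ) * 2 = k * (2 * q + k - 2 * p + 1) := by
    rw [hF3, Finset.card_biUnion]
    · have : ∀ i ∈ Finset.Ico p (p + k), ({i} ×ˢ Finset.Ico i (q + k)).card
          = (Finset.Ico i (q + k)).card := by
        intro i _
        rw [Finset.card_product, Finset.card_singleton, one_mul]
      rw [Finset.sum_congr rfl this]
      push_cast
      have he : ∀ i ∈ Finset.Ico p (p + k),
          ((Finset.Ico i (q + k)).card : ℤ) = (q + k) - i := by
        intro i hi
        simp only [Finset.mem_Ico] at hi
        rw [Int.card_Ico]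
        omega
      rw [Finset.sum_congr rfl he]
      have := sum_lin_aux (q + k) p k.toNat
      rw [show ((k.toNat : ℤ)) = k by omega] at this
      linear_combination this
    · intro a _ b _ hab
      rw [Function.onFun, Finset.disjoint_left]
      intro x hx1 hx2
      simp only [Finset.mem_product, Finset.mem_singleton] at hx1 hx2
      exact hab (hx1.1 ▸ hx2.1.symm ▸ rfl)
  have hlen : (lenCountInf w : ℤ) = (FA.card : ℤ) + ((FA.card : ℤ) + (F3.card : ℤ)) := by
    rw [lenCountInf, hA, hB, Set.ncard_coe_finset, Set.ncard_coe_finset,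
      Finset.card_union_of_disjoint hdisj]
    push_cast
    ring
  have hE : k * (k - 1) / 2 * 2 = k * (k - 1) := by
    have h := Int.even_mul_succ_self (k - 1)
    obtain ⟨m, hm⟩ := h
    have : k * (k - 1) = 2 * m := by linear_combination hm
    omega
  have key : (lenCountInf w : ℤ) * 2 = ((p + q - 1) * k + k * (k - 1) / 2) * 2 := by
    rw [hlen]
    linear_combination hcardF3 + 2 * hcardFA + 2 * hcardFA - hE
  omega

theorem stmt8 (k p q : ℤ) (hk : 0 < k) (hp : 0 < p) (hpq : p ≤ q)
    (w : Equiv.Perm ℤ) (h1 : IsSigned w)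
    (hw : ∀ i : ℤ, 1 ≤ i →
      w i = if i < p then i else if i < p + k then i - p - (q + k - 1)
            else if i < q + k then i - k else i) :
    (lenCountInf w : ℤ) = (p + q - 1) * k + k * (k - 1) / 2 := by
  exact stmt8' k p q hk hp hpq w h1 hw
end

section
/- The number of type B basic triples (k,p,q) with max{p+k-1, q+k-1} ≤ n equals (2n³ + n)/3. -/
/-!
Split the triples by the sign of `q`. For `q > 0` the conditions say `p, q ∈ [1, n + 1 - k]`,
so the triple is a point `(p, q)` of the `(n + 1 - k)`-square of a pyramid of squares.
For `q < 0` they say `p ≥ 2` and `-q ∈ [1, p + k - 2]` with `p + k ≤ n + 1`, so `(k, -q)` is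
a point of the `(p + k - 2)`-square of a pyramid one layer lower. Hence the count is
`∑_{j ≤ n} j² + ∑_{j < n} j²`.
-/

open Finset

noncomputable def squarePyramid (N : ℕ) : Finset (Σ _ : ℕ, ℤ × ℤ) :=
  (range N).sigma fun j => Icc 1 ((j : ℤ) + 1) ×ˢ Icc 1 ((j : ℤ) + 1)

theorem six_mul_card_squarePyramid (N : ℕ) :
    6 * #(squarePyramid N) = N * (N + 1) * (2 * N + 1) := by
  have layer (j : ℕ) : #(Icc 1 ((j : ℤ) + 1) ×ˢ Icc 1 ((j : ℤ) + 1)) = (j + 1) ^ 2 := by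
    rw [card_product, Int.card_Icc, add_sub_cancel_right, sq]
    norm_cast
  induction N with
  | zero => rfl
  | succ N ih =>
    rw [squarePyramid, card_sigma, sum_range_succ, layer] at *
    rw [mul_add, ih]
    ring

theorem three_mul_card_squarePyramid_add_pred (n : ℕ) :
    3 * (#(squarePyramid n) + #(squarePyramid (n - 1))) = 2 * n ^ 3 + n := by
  cases n with
  | zero => rfl
  | succ m =>
    have h₁ := six_mul_card_squarePyramid (m + 1)
    have h₀ := six_mul_card_squarePyramid m
    rw [Nat.add_sub_cancel]
    linarith

open Classical in
noncomputable def basicTriples (n : ℕ) : Finset (ℤ × ℤ × ℤ) :=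
  (Icc 1 (n : ℤ) ×ˢ Icc 1 (n : ℤ) ×ˢ Icc (1 - n : ℤ) n).filter fun t =>
    BasicB t.1 t.2.1 t.2.2 ∧ max (t.2.1 + t.1 - 1) (t.2.2 + t.1 - 1) ≤ (n : ℤ)

section basicTriples

variable (n : ℕ)

theorem coe_basicTriples :
    (basicTriples n : Set (ℤ × ℤ × ℤ)) = {t : ℤ × ℤ × ℤ | BasicB t.1 t.2.1 t.2.2 ∧
      max (t.2.1 + t.1 - 1) (t.2.2 + t.1 - 1) ≤ (n : ℤ)} := by
  ext ⟨k, p, q⟩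
  simp only [basicTriples, coe_filter, mem_product, mem_Icc, Set.mem_ofPred_eq, BasicB,
    max_le_iff]
  omega

theorem card_basicTriples_filter_pos :
    #((basicTriples n).filter (0 < ·.2.2)) = #(squarePyramid n) := by
  refine card_bij' (fun t _ => ⟨(n - t.1 : ℤ).toNat, t.2.1, t.2.2⟩)
    (fun x _ => (n - x.1, x.2.1, x.2.2)) ?_ ?_ ?_ ?_
  all_goals
    rintro ⟨_, _, _⟩ h
    simp only [basicTriples, squarePyramid, mem_filter, mem_sigma, mem_range, mem_product,
      mem_Icc, BasicB, max_le_iff, Prod.mk.injEq, Sigma.mk.injEq, heq_eq_eq, and_true] at h ⊢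
    split_ands <;> omega

theorem card_basicTriples_filter_not_pos :
    #((basicTriples n).filter (¬ 0 < ·.2.2)) = #(squarePyramid (n - 1)) := by
  refine card_bij' (fun t _ => ⟨(t.1 + t.2.1 - 3).toNat, t.1, -t.2.2⟩)
    (fun x _ => (x.2.1, x.1 + 3 - x.2.1, -x.2.2)) ?_ ?_ ?_ ?_
  all_goals
    rintro ⟨_, _, _⟩ h
    simp only [basicTriples, squarePyramid, mem_filter, mem_sigma, mem_range, mem_product,
      mem_Icc, BasicB, max_le_iff, Prod.mk.injEq, Sigma.mk.injEq, heq_eq_eq, true_and, and_true,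
      neg_neg] at h ⊢
    split_ands <;> omega

end basicTriples

theorem stmt9 (n : ℕ) :
    3 * {t : ℤ × ℤ × ℤ | BasicB t.1 t.2.1 t.2.2 ∧
        max (t.2.1 + t.1 - 1) (t.2.2 + t.1 - 1) ≤ (n : ℤ)}.ncard = 2 * n ^ 3 + n := by
  rw [← coe_basicTriples, Set.ncard_coe_finset,
    ← card_filter_add_card_filter_not (p := (0 < ·.2.2)), card_basicTriples_filter_pos,
    card_basicTriples_filter_not_pos, three_mul_card_squarePyramid_add_pred]
end

section
/- The number of bigrassmannian permutations in S_n equals (n³ - n)/6, i.e. the binomial coefficient C(n+1, 3). -/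
def bgfun (a d c i : ℤ) : ℤ :=
  if i ≤ a then i else if i ≤ d then i + (c - d) else if i ≤ c then i - (d - a) else i

lemma bg_li (a d c : ℤ) (h1 : a < d) (h2 : d < c) :
    Function.LeftInverse (bgfun a (a + c - d) c) (bgfun a d c) := by
  intro i; unfold bgfun; split_ifs <;> omega

noncomputable def bg (a d c : ℤ) : Equiv.Perm ℤ :=
  if h : a < d ∧ d < c then
    { toFun := bgfun a d c, invFun := bgfun a (a + c - d) c,
      left_inv := bg_li a d c h.1 h.2,
      right_inv := fun i => by
        have := bg_li a (a + c - d) c (by omega) (by omega) i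
        rwa [show a + c - (a + c - d) = d by ring] at this }
  else 1

lemma bg_apply (a d c i : ℤ) (h1 : a < d) (h2 : d < c) : bg a d c i = bgfun a d c i := by
  rw [bg, dif_pos ⟨h1, h2⟩]; rfl

lemma bg_inv (a d c : ℤ) (h1 : a < d) (h2 : d < c) :
    (bg a d c)⁻¹ = bg a (a + c - d) c := by
  apply Equiv.ext
  intro i
  rw [bg, bg, dif_pos ⟨h1, h2⟩, dif_pos (show a < a + c - d ∧ a + c - d < c by omega)]
  rfl

/-- chain lemma -/
lemma chain (f : ℤ → ℤ) (i : ℤ) : ∀ j, i ≤ j → (∀ m, i ≤ m → m < j → f m < f (m + 1)) →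
    f i + (j - i) ≤ f j := by
  refine Int.le_induction ?_ ?_
  · intro _; omega
  · intro j hj ih h
    have h1 := ih (fun m hm hm2 => h m hm (by omega))
    have h2 := h j (by omega) (by omega)
    omega

lemma bg_descent (n a d c : ℤ) (h0 : 0 ≤ a) (h1 : a < d) (h2 : d < c) (h3 : c ≤ n) :
    ∃! D : ℤ, 1 ≤ D ∧ D < n ∧ bg a d c (D + 1) < bg a d c D := by
  refine ⟨d, ⟨by omega, by omega, ?_⟩, ?_⟩
  · rw [bg_apply _ _ _ _ h1 h2, bg_apply _ _ _ _ h1 h2]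
    unfold bgfun; split_ifs <;> omega
  · intro D hD
    obtain ⟨hD1, hD2, hD3⟩ := hD
    rw [bg_apply _ _ _ _ h1 h2, bg_apply _ _ _ _ h1 h2] at hD3
    unfold bgfun at hD3; split_ifs at hD3 <;> omega

lemma bg_fix (n a d c : ℤ) (h0 : 0 ≤ a) (h1 : a < d) (h2 : d < c) (h3 : c ≤ n) :
    ∀ i : ℤ, i < 1 ∨ n < i → bg a d c i = i := by
  intro i hi
  rw [bg_apply _ _ _ _ h1 h2]
  unfold bgfun; split_ifs <;> omega

lemma bg_surj (n : ℤ) (v : Equiv.Perm ℤ) (hfix : ∀ i : ℤ, i < 1 ∨ n < i → v i = i)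
    (hd : ∃! d : ℤ, 1 ≤ d ∧ d < n ∧ v (d + 1) < v d)
    (he : ∃! e : ℤ, 1 ≤ e ∧ e < n ∧ v⁻¹ (e + 1) < v⁻¹ e) :
    ∃ a d c : ℤ, 0 ≤ a ∧ a < d ∧ d < c ∧ c ≤ n ∧ v = bg a d c := by
  obtain ⟨d, ⟨hd1, hd2, hd3⟩, hdu⟩ := hd
  obtain ⟨e, ⟨he1, he2, he3⟩, heu⟩ := he
  have hn2 : 2 ≤ n := by omega
  have hinvfix : ∀ i : ℤ, i < 1 ∨ n < i → v⁻¹ i = i := by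
    intro i h
    conv_lhs => rw [← hfix i h]
    exact v.symm_apply_apply i
  have hrange : ∀ i : ℤ, 1 ≤ i → i ≤ n → 1 ≤ v i ∧ v i ≤ n := by
    intro i hi1 hi2
    by_contra hcon
    have h' : v i < 1 ∨ n < v i := by omega
    have := hfix (v i) h'
    have := v.injective this
    omega
  have hrangeinv : ∀ i : ℤ, 1 ≤ i → i ≤ n → 1 ≤ v⁻¹ i ∧ v⁻¹ i ≤ n := by
    intro i hi1 hi2
    by_contra hcon
    have h' : v⁻¹ i < 1 ∨ n < v⁻¹ i := by omega
    have := hinvfix (v⁻¹ i) h'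
    have := v⁻¹.injective this
    omega
  have stepv : ∀ m : ℤ, m ≠ d → v m < v (m + 1) := by
    intro m hm
    rcases lt_trichotomy m 0 with h | h | h
    · have e1 := hfix m (by omega)
      rcases lt_or_ge (m+1) 1 with h' | h'
      · have e2 := hfix (m+1) (by omega)
        omega
      · have e2 := hrange (m+1) (by omega) (by omega)
        omega
    · have e1 := hfix m (by omega)
      have e2 := hrange (m+1) (by omega) (by omega)
      omega
    · rcases lt_trichotomy m n with h' | h' | h'
      · have h1 : ¬ (v (m+1) < v m) := fun hc => hm (hdu m ⟨by omega, by omega, hc⟩)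
        have h2 : v m ≠ v (m+1) := fun hc => by have := v.injective hc; omega
        omega
      · have e1 := hrange m (by omega) (by omega)
        have e2 := hfix (m+1) (by omega)
        omega
      · have e1 := hfix m (by omega)
        have e2 := hfix (m+1) (by omega)
        omega
  have stepw : ∀ m : ℤ, m ≠ e → v⁻¹ m < v⁻¹ (m + 1) := by
    intro m hm
    rcases lt_trichotomy m 0 with h | h | h
    · have e1 := hinvfix m (by omega)
      rcases lt_or_ge (m+1) 1 with h' | h'
      · have e2 := hinvfix (m+1) (by omega)
        omega
      · have e2 := hrangeinv (m+1) (by omega) (by omega)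
        omega
    · have e1 := hinvfix m (by omega)
      have e2 := hrangeinv (m+1) (by omega) (by omega)
      omega
    · rcases lt_trichotomy m n with h' | h' | h'
      · have h1 : ¬ (v⁻¹ (m+1) < v⁻¹ m) := fun hc => hm (heu m ⟨by omega, by omega, hc⟩)
        have h2 : v⁻¹ m ≠ v⁻¹ (m+1) := fun hc => by have := v⁻¹.injective hc; omega
        omega
      · have e1 := hrangeinv m (by omega) (by omega)
        have e2 := hinvfix (m+1) (by omega)
        omega
      · have e1 := hinvfix m (by omega)
        have e2 := hinvfix (m+1) (by omega)
        omega
  have monov : ∀ i j : ℤ, i ≤ j → (d < i ∨ j ≤ d) → v i + (j - i) ≤ v j := by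
    intro i j hij hside
    exact chain (fun x => v x) i j hij (fun m hm1 hm2 => stepv m (by omega))
  have monow : ∀ i j : ℤ, i ≤ j → (e < i ∨ j ≤ e) → v⁻¹ i + (j - i) ≤ v⁻¹ j := by
    intro i j hij hside
    exact chain (fun x => v⁻¹ x) i j hij (fun m hm1 hm2 => stepw m (by omega))
  have vP : v (v⁻¹ e) = e := v.apply_symm_apply e
  have vQ : v (v⁻¹ (e+1)) = e + 1 := v.apply_symm_apply (e+1)
  have wA : v⁻¹ (v (d+1)) = d + 1 := v.symm_apply_apply (d+1)
  have wD : v⁻¹ (v d) = d := v.symm_apply_apply d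
  -- Fact 1
  have f1a : v (d + 1) ≤ e := by
    by_contra hcon
    have := monow (v (d+1)) (v d) (by omega) (Or.inl (by omega))
    omega
  have f1b : e < v d := by
    by_contra hcon
    have := monow (v (d+1)) (v d) (by omega) (Or.inr (by omega))
    omega
  -- Fact 2
  have f2a : v⁻¹ (e + 1) ≤ d := by
    by_contra hcon
    have := monov (v⁻¹ (e+1)) (v⁻¹ e) (by omega) (Or.inl (by omega))
    omega
  have f2b : d < v⁻¹ e := by
    by_contra hcon
    have := monov (v⁻¹ (e+1)) (v⁻¹ e) (by omega) (Or.inr (by omega))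
    omega
  have ha0 : 1 ≤ v (d+1) := (hrange (d+1) (by omega) (by omega)).1
  have hcn : v d ≤ n := (hrange d (by omega) (by omega)).2
  -- Claim A
  have heq1 : v⁻¹ e = d + e - v (d + 1) + 1 := by
    have c1 := monov (d + 1) (v⁻¹ e) (by omega) (Or.inl (by omega))
    have c2 := monow (v (d+1)) e f1a (Or.inr le_rfl)
    omega
  have claimA : ∀ i : ℤ, d < i → i ≤ v⁻¹ e → v i = i - d + v (d + 1) - 1 := by
    intro i hi1 hi2
    have lo := monov (d + 1) i (by omega) (Or.inl (by omega))
    have hi := monov i (v⁻¹ e) hi2 (Or.inl (by omega))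
    omega
  -- Claim B
  have heq2 : d - v⁻¹ (e + 1) = v d - e - 1 := by
    have c1 := monov (v⁻¹ (e+1)) d f2a (Or.inr le_rfl)
    have c2 := monow (e + 1) (v d) (by omega) (Or.inl (by omega))
    omega
  have claimB : ∀ i : ℤ, v⁻¹ (e + 1) ≤ i → i ≤ d → v i = i + (v d - d) := by
    intro i hi1 hi2
    have lo := monov (v⁻¹ (e+1)) i hi1 (Or.inr hi2)
    have hi := monov i d hi2 (Or.inr le_rfl)
    omega
  have hQ1 : 1 ≤ v⁻¹ (e + 1) := (hrangeinv (e+1) (by omega) (by omega)).1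
  -- values below Q are ≤ a
  have sub : ∀ i : ℤ, 1 ≤ i → i < v⁻¹ (e + 1) → v i ≤ v (d + 1) - 1 := by
    intro i hi1 hi2
    have h1 := monov i (v⁻¹ (e+1)) (by omega) (Or.inr f2a)
    by_contra hcon
    have h2 := claimA (d + (v i - (v (d + 1) - 1))) (by omega) (by omega)
    have h3 : v (d + (v i - (v (d + 1) - 1))) = v i := by omega
    have := v.injective h3
    omega
  have hQa : v⁻¹ (e + 1) = v (d + 1) := by
    have hle : v⁻¹ (e + 1) ≤ v (d + 1) := by
      rcases eq_or_lt_of_le hQ1 with h | h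
      · omega
      · have c1 := monov 1 (v⁻¹ (e+1) - 1) (by omega) (Or.inr (by omega))
        have c2 := sub (v⁻¹ (e+1) - 1) (by omega) (by omega)
        have c3 := hrange 1 le_rfl (by omega)
        omega
    have hge : v (d + 1) ≤ v⁻¹ (e + 1) := by
      by_contra hcon
      have hsub2 : ∀ j : ℤ, 1 ≤ j → j ≤ v (d + 1) - 1 → v⁻¹ j < v⁻¹ (e + 1) := by
        intro j hj1 hj2
        have h1 := monow j e (by omega) (Or.inr le_rfl)
        by_contra hcon2
        have h2 := claimB (v⁻¹ j) (by omega) (by omega)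
        have h3 : v (v⁻¹ j) = j := v.apply_symm_apply j
        omega
      have c1 := monow 1 (v (d + 1) - 1) (by omega) (Or.inr (by omega))
      have c2 := hsub2 (v (d + 1) - 1) (by omega) le_rfl
      have c3 := hsub2 1 le_rfl (by omega)
      have c4 := hrangeinv 1 le_rfl (by omega)
      omega
    omega
  have hPc : v⁻¹ e = v d := by omega
  have had : v (d + 1) - 1 < d := by omega
  have hdc : d < v d := by omega
  -- fixed low
  have fixlow : ∀ i : ℤ, 1 ≤ i → i ≤ v (d + 1) - 1 → v i = i := by
    intro i hi1 hi2
    have lo := monov 1 i (by omega) (Or.inr (by omega))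
    have hi' := monov i (v (d + 1) - 1) hi2 (Or.inr (by omega))
    have h1 := hrange 1 le_rfl (by omega)
    have h2 := sub (v (d + 1) - 1) (by omega) (by omega)
    omega
  -- fixed high
  have highge : ∀ i : ℤ, v d < i → i ≤ n → v d + 1 ≤ v i := by
    intro i hi1 hi2
    have lo := monov (v⁻¹ e) i (by omega) (Or.inl (by omega))
    by_contra hcon
    have h2 := claimB (v i - (v d - d)) (by omega) (by omega)
    have h3 : v (v i - (v d - d)) = v i := by omega
    have := v.injective h3
    omega
  have fixhigh : ∀ i : ℤ, v d < i → i ≤ n → v i = i := by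
    intro i hi1 hi2
    have lo := monov (v d + 1) i (by omega) (Or.inl (by omega))
    have hi' := monov i n hi2 (Or.inl (by omega))
    have h1 := highge (v d + 1) (by omega) (by omega)
    have h2 := hrange n (by omega) le_rfl
    omega
  refine ⟨v (d + 1) - 1, d, v d, by omega, had, hdc, hcn, ?_⟩
  apply Equiv.ext
  intro i
  rw [bg_apply _ _ _ _ had hdc]
  unfold bgfun
  rcases lt_or_ge i 1 with h | h
  · rw [hfix i (Or.inl h), if_pos (by omega)]
  · split_ifs with h1 h2 h3
    · exact fixlow i h h1
    · have := claimB i (by omega) h2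
      omega
    · have := claimA i (by omega) (by omega)
      omega
    · rcases le_or_gt i n with h' | h'
      · exact fixhigh i (by omega) h'
      · exact hfix i (Or.inr h')

lemma bg_inj (a d c a' d' c' : ℤ) (h1 : a < d) (h2 : d < c) (h1' : a' < d') (h2' : d' < c')
    (heq : bg a d c = bg a' d' c') : a = a' ∧ d = d' ∧ c = c' := by
  have key : ∀ i : ℤ, bgfun a d c i = bgfun a' d' c' i := by
    intro i
    rw [← bg_apply _ _ _ _ h1 h2, ← bg_apply _ _ _ _ h1' h2', heq]
  have ha : a = a' := by
    rcases lt_trichotomy a a' with h | h | h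
    · have := key (a + 1); unfold bgfun at this; split_ifs at this <;> omega
    · exact h
    · have := key (a' + 1); unfold bgfun at this; split_ifs at this <;> omega
  have hc : c = c' := by
    rcases lt_trichotomy c c' with h | h | h
    · have := key c'; unfold bgfun at this; split_ifs at this <;> omega
    · exact h
    · have := key c; unfold bgfun at this; split_ifs at this <;> omega
  have hd : d = d' := by
    rcases lt_trichotomy d d' with h | h | h
    · have := key d'; unfold bgfun at this; split_ifs at this <;> omega
    · exact h
    · have := key d; unfold bgfun at this; split_ifs at this <;> omega
  exact ⟨ha, hd, hc⟩

lemma triple_count (n : ℕ) :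
    ((Finset.Icc (0:ℤ) n ×ˢ (Finset.Icc (0:ℤ) n ×ˢ Finset.Icc (0:ℤ) n)).filter
      (fun t => t.1 < t.2.1 ∧ t.2.1 < t.2.2)).card = (n + 1).choose 3 := by
  have hcard : (Finset.Icc (0:ℤ) n).card = n + 1 := by
    rw [Int.card_Icc]; omega
  rw [← hcard, ← Finset.card_powersetCard]
  apply Finset.card_bij (fun t _ => ({t.1, t.2.1, t.2.2} : Finset ℤ))
  · rintro ⟨a, d, c⟩ ht
    simp only [Finset.mem_filter, Finset.mem_product, Finset.mem_Icc] at ht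
    rw [Finset.mem_powersetCard]
    constructor
    · intro x hx
      simp only [Finset.mem_insert, Finset.mem_singleton] at hx
      rcases hx with h | h | h <;> (subst h; simp only [Finset.mem_Icc]; omega)
    · exact Finset.card_eq_three.mpr ⟨a, d, c, by omega, by omega, by omega, rfl⟩
  · rintro ⟨a, d, c⟩ ht ⟨a', d', c'⟩ ht' h
    simp only [Finset.mem_filter, Finset.mem_product, Finset.mem_Icc] at ht ht'
    have key := Finset.ext_iff.mp h
    simp only [Finset.mem_insert, Finset.mem_singleton] at key
    have k1 := (key a).mp (by left; rfl)
    have k2 := (key d).mp (by right; left; rfl)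
    have k3 := (key c).mp (by right; right; rfl)
    simp only [Prod.mk.injEq]
    rcases k1 with h1 | h1 | h1 <;> rcases k2 with h2 | h2 | h2 <;>
      rcases k3 with h3 | h3 | h3 <;> refine ⟨by omega, by omega, by omega⟩
  · intro s hs
    rw [Finset.mem_powersetCard] at hs
    obtain ⟨hsub, hcard3⟩ := hs
    obtain ⟨x, y, z, hxy, hxz, hyz, rfl⟩ := Finset.card_eq_three.mp hcard3
    have hx := hsub (by simp : x ∈ ({x, y, z} : Finset ℤ))
    have hy := hsub (by simp : y ∈ ({x, y, z} : Finset ℤ))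
    have hz := hsub (by simp : z ∈ ({x, y, z} : Finset ℤ))
    simp only [Finset.mem_Icc] at hx hy hz
    have hmem : ∀ p q r : ℤ, p < q → q < r → 0 ≤ p → (r : ℤ) ≤ n →
        ({p, q, r} : Finset ℤ) = {x, y, z} →
        ∃ t, ∃ ht : t ∈ (Finset.Icc (0:ℤ) n ×ˢ (Finset.Icc (0:ℤ) n ×ˢ Finset.Icc (0:ℤ) n)).filter
          (fun t => t.1 < t.2.1 ∧ t.2.1 < t.2.2),
          ({t.1, t.2.1, t.2.2} : Finset ℤ) = {x, y, z} := by
      intro p q r hpq hqr hp hr hset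
      refine ⟨(p, q, r), ?_, hset⟩
      simp only [Finset.mem_filter, Finset.mem_product, Finset.mem_Icc]
      exact ⟨⟨⟨hp, by omega⟩, ⟨by omega, by omega⟩, ⟨by omega, hr⟩⟩, hpq, hqr⟩
    rcases lt_trichotomy x y with h1 | h1 | h1 <;> rcases lt_trichotomy y z with h2 | h2 | h2 <;>
      rcases lt_trichotomy x z with h3 | h3 | h3 <;>
      first
        | omega
        | (exact hmem x y z (by omega) (by omega) (by omega) (by omega) (by ext w; simp; try tauto))
        | (exact hmem x z y (by omega) (by omega) (by omega) (by omega) (by ext w; simp; try tauto))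
        | (exact hmem y x z (by omega) (by omega) (by omega) (by omega) (by ext w; simp; try tauto))
        | (exact hmem y z x (by omega) (by omega) (by omega) (by omega) (by ext w; simp; try tauto))
        | (exact hmem z x y (by omega) (by omega) (by omega) (by omega) (by ext w; simp; try tauto))
        | (exact hmem z y x (by omega) (by omega) (by omega) (by omega) (by ext w; simp; try tauto))

theorem stmt10 (n : ℕ) :
    {v : Equiv.Perm ℤ | (∀ i : ℤ, i < 1 ∨ (n : ℤ) < i → v i = i) ∧
        (∃! d : ℤ, 1 ≤ d ∧ d < n ∧ v (d + 1) < v d) ∧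
        (∃! d : ℤ, 1 ≤ d ∧ d < n ∧ v⁻¹ (d + 1) < v⁻¹ d)}.ncard
      = Nat.choose (n + 1) 3 := by
  classical
  set TF : Finset (ℤ × ℤ × ℤ) :=
    (Finset.Icc (0:ℤ) n ×ˢ (Finset.Icc (0:ℤ) n ×ˢ Finset.Icc (0:ℤ) n)).filter
      (fun t => t.1 < t.2.1 ∧ t.2.1 < t.2.2) with hTF
  have hset : {v : Equiv.Perm ℤ | (∀ i : ℤ, i < 1 ∨ (n : ℤ) < i → v i = i) ∧
        (∃! d : ℤ, 1 ≤ d ∧ d < n ∧ v (d + 1) < v d) ∧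
        (∃! d : ℤ, 1 ≤ d ∧ d < n ∧ v⁻¹ (d + 1) < v⁻¹ d)}
      = (fun t : ℤ × ℤ × ℤ => bg t.1 t.2.1 t.2.2) '' ↑TF := by
    ext v
    constructor
    · rintro ⟨hfix, hd, he⟩
      obtain ⟨a, d, c, h0, h1, h2, h3, rfl⟩ := bg_surj n v hfix hd he
      refine ⟨(a, d, c), ?_, rfl⟩
      simp only [hTF, Finset.coe_filter, Finset.mem_product, Finset.mem_Icc, Set.mem_setOf_eq]
      refine ⟨⟨⟨h0, by omega⟩, ⟨by omega, by omega⟩, ⟨by omega, h3⟩⟩, h1, h2⟩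
    · rintro ⟨⟨a, d, c⟩, ht, rfl⟩
      simp only [hTF, Finset.coe_filter, Finset.mem_product, Finset.mem_Icc, Set.mem_setOf_eq] at ht
      obtain ⟨⟨⟨ha0, _⟩, _, ⟨_, hcn⟩⟩, h1, h2⟩ := ht
      refine ⟨bg_fix n a d c ha0 h1 h2 hcn, bg_descent n a d c ha0 h1 h2 hcn, ?_⟩
      rw [bg_inv a d c h1 h2]
      exact bg_descent n a (a + c - d) c ha0 (by omega) (by omega) hcn
  rw [hset, Set.ncard_image_of_injOn, Set.ncard_coe_finset]
  · exact triple_count n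
  · rintro ⟨a, d, c⟩ ht ⟨a', d', c'⟩ ht' h
    simp only [hTF, Finset.coe_filter, Finset.mem_product, Finset.mem_Icc, Set.mem_setOf_eq]
      at ht ht'
    obtain ⟨ha, hd, hc⟩ := bg_inj a d c a' d' c' ht.2.1 ht.2.2 ht'.2.1 ht'.2.2 h
    simp only [Prod.mk.injEq]
    exact ⟨ha, hd, hc⟩
end

section
/- For positive integers k, p, q with p ≥ k > p - q, the basic permutation v(k,p,q) (one-line notation 1, ..., p-k, q+1, ..., q+k, p-k+1, ..., q) is the unique minimum in Bruhat order among permutations v ∈ S_n satisfying r_v(p,q) ≥ k, where r_v(p,q) = #{i ≤ p : v(i) > q}. -/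
namespace S12

open Finset


/-- v fixes everything outside [1,n] -/
def Supp (n : ℤ) (v : Equiv.Perm ℤ) : Prop := ∀ i : ℤ, i < 1 ∨ n < i → v i = i

noncomputable def Invs (n : ℤ) (v : Equiv.Perm ℤ) : Finset (ℤ × ℤ) :=
  (Finset.Icc 1 n ×ˢ Finset.Icc 1 n).filter fun x => x.1 < x.2 ∧ v x.2 < v x.1

noncomputable def inv (n : ℤ) (v : Equiv.Perm ℤ) : ℕ := (Invs n v).card

theorem supp_one (n : ℤ) : Supp n 1 := fun i _ => rfl

theorem supp_mul {n : ℤ} {v w : Equiv.Perm ℤ} (hv : Supp n v) (hw : Supp n w) :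
    Supp n (v * w) := fun i hi => by
  simp only [Equiv.Perm.mul_apply]; rw [hw i hi, hv i hi]

theorem supp_swap {n a b : ℤ} (ha : 1 ≤ a) (hab : a ≤ b) (hb : b ≤ n) :
    Supp n (Equiv.swap a b) := fun i hi => by
  rw [Equiv.swap_apply_of_ne_of_ne] <;> omega

theorem mem_box {n : ℤ} {v : Equiv.Perm ℤ} (hv : Supp n v) {i : ℤ}
    (hi : i ∈ Finset.Icc 1 n) : v i ∈ Finset.Icc 1 n := by
  simp only [Finset.mem_Icc] at *
  by_contra h
  have := hv (v i) (by omega)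
  have := v.injective this
  omega

theorem count_perm {s : Finset ℤ} {σ : Equiv.Perm ℤ} (h : ∀ i ∈ s, σ i ∈ s)
    (P : ℤ → Prop) [DecidablePred P] :
    (s.filter fun i => P (σ i)).card = (s.filter P).card := by
  have him : s.image σ = s := by
    apply Finset.eq_of_subset_of_card_le
    · intro x hx
      obtain ⟨y, hy, rfl⟩ := Finset.mem_image.mp hx
      exact h y hy
    · rw [Finset.card_image_of_injective _ σ.injective]
  calc (s.filter fun i => P (σ i)).card
      = ((s.filter fun i => P (σ i)).image σ).card :=
        (Finset.card_image_of_injective _ σ.injective).symm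
    _ = ((s.image σ).filter P).card := by rw [Finset.filter_image]
    _ = (s.filter P).card := by rw [him]

theorem count_v {n : ℤ} {v : Equiv.Perm ℤ} (hv : Supp n v) (P : ℤ → Prop) [DecidablePred P] :
    ((Finset.Icc 1 n).filter fun i => P (v i)).card = ((Finset.Icc 1 n).filter P).card :=
  count_perm (fun _ hi => mem_box hv hi) P



def tf (a b : ℤ) (x : ℤ × ℤ) : ℤ × ℤ :=
  if x.1 = a then (if x.2 ≤ b then x else (b, x.2))
  else if x.2 = b then (if a < x.1 then x else (x.1, a))
  else if x.2 = a then (x.1, b)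
  else if x.1 = b then (a, x.2)
  else x

set_option maxHeartbeats 1000000 in
theorem tf_invol {a b : ℤ} (hab : a < b) (x : ℤ × ℤ) (hx : x.1 < x.2) :
    tf a b (tf a b x) = x := by
  obtain ⟨i, j⟩ := x
  simp only [tf]
  split_ifs <;> simp_all [Prod.ext_iff] <;> omega



theorem mem_Invs {n : ℤ} {v : Equiv.Perm ℤ} {x : ℤ × ℤ} :
    x ∈ Invs n v ↔ (1 ≤ x.1 ∧ x.1 ≤ n) ∧ (1 ≤ x.2 ∧ x.2 ≤ n) ∧ x.1 < x.2 ∧ v x.2 < v x.1 := by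
  simp [Invs, Finset.mem_filter, Finset.mem_product, Finset.mem_Icc, and_assoc]

set_option maxHeartbeats 2000000 in
theorem tf_maps_A {n a b : ℤ} {v : Equiv.Perm ℤ} (ha : 1 ≤ a) (hab : a < b) (hb : b ≤ n)
    (hvab : v b < v a) :
    ∀ x ∈ Invs n (v * Equiv.swap a b), tf a b x ∈ (Invs n v).erase (a, b) := by
  rintro ⟨i, j⟩ hx
  rw [mem_Invs] at hx
  obtain ⟨⟨hi1, hi2⟩, ⟨hj1, hj2⟩, hij, hv⟩ := hx
  simp only [Equiv.Perm.mul_apply, Equiv.swap_apply_def] at hv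
  rw [Finset.mem_erase, mem_Invs]
  simp only [tf, Prod.ext_iff]
  split_ifs at hv ⊢ <;> simp_all <;> omega

set_option maxHeartbeats 2000000 in
theorem tf_maps_adj {n a : ℤ} {v : Equiv.Perm ℤ} (ha : 1 ≤ a) (han : a < n) :
    ∀ x ∈ (Invs n v).erase (a, a + 1), tf a (a + 1) x ∈ Invs n (v * Equiv.swap a (a + 1)) := by
  rintro ⟨i, j⟩ hx
  rw [Finset.mem_erase, mem_Invs] at hx
  obtain ⟨hne, ⟨hi1, hi2⟩, ⟨hj1, hj2⟩, hij, hv⟩ := hx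
  rw [mem_Invs]
  simp only [Equiv.Perm.mul_apply, Equiv.swap_apply_def]
  simp only [tf, Prod.ext_iff] at hne ⊢
  split_ifs <;> simp_all <;> omega


theorem tf_injOn {n a b : ℤ} {v : Equiv.Perm ℤ} (hab : a < b) {s : Finset (ℤ × ℤ)}
    (hs : s ⊆ Invs n v) :
    ∀ x ∈ s, ∀ y ∈ s, tf a b x = tf a b y → x = y := by
  intro x hx y hy h
  have hx' := (mem_Invs.mp (hs hx)).2.2.1
  have hy' := (mem_Invs.mp (hs hy)).2.2.1
  rw [← tf_invol hab x hx', h, tf_invol hab y hy']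

theorem lemA {n a b : ℤ} {v : Equiv.Perm ℤ} (ha : 1 ≤ a) (hab : a < b) (hb : b ≤ n)
    (hvab : v b < v a) : inv n (v * Equiv.swap a b) < inv n v := by
  have hmem : (a, b) ∈ Invs n v := mem_Invs.mpr ⟨⟨ha, by omega⟩, ⟨by omega, hb⟩, hab, hvab⟩
  have hcard : (Invs n (v * Equiv.swap a b)).card ≤ ((Invs n v).erase (a, b)).card :=
    Finset.card_le_card_of_injOn (tf a b) (tf_maps_A ha hab hb hvab)
      (tf_injOn hab (fun x hx => mem_Invs.mpr (mem_Invs.mp hx)))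
  rw [Finset.card_erase_of_mem hmem] at hcard
  have hpos : 0 < (Invs n v).card := Finset.card_pos.mpr ⟨_, hmem⟩
  unfold inv
  omega

theorem lemB {n a : ℤ} {v : Equiv.Perm ℤ} (ha : 1 ≤ a) (han : a < n) :
    inv n v ≤ inv n (v * Equiv.swap a (a + 1)) + 1 := by
  have hcard : ((Invs n v).erase (a, a + 1)).card ≤ (Invs n (v * Equiv.swap a (a + 1))).card :=
    Finset.card_le_card_of_injOn (tf a (a + 1)) (tf_maps_adj ha han)
      (tf_injOn (by omega) (Finset.erase_subset _ _))
  have := Finset.card_erase_le (s := Invs n v) (a := ((a : ℤ), a + 1))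
  by_cases hm : (a, a + 1) ∈ Invs n v
  · rw [Finset.card_erase_of_mem hm] at hcard
    have hpos : 0 < (Invs n v).card := Finset.card_pos.mpr ⟨_, hm⟩
    unfold inv; omega
  · rw [Finset.erase_eq_of_notMem hm] at hcard
    unfold inv; omega


theorem chain_lt {n : ℤ} {v : Equiv.Perm ℤ}
    (hnd : ∀ i : ℤ, 1 ≤ i → i < n → v i < v (i + 1)) :
    ∀ i : ℤ, 1 ≤ i → ∀ j : ℤ, i < j → j ≤ n → v i < v j := by
  intro i hi
  have H : ∀ d : ℕ, ∀ j : ℤ, j - i = (d : ℤ) + 1 → i < j → j ≤ n → v i < v j := by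
    intro d
    induction d with
    | zero =>
      intro j h1 _ h3
      have hj : j = i + 1 := by omega
      subst hj
      exact hnd i hi (by omega)
    | succ m ih =>
      intro j h1 h2 h3
      have h4 : v (j - 1) < v j := by
        have := hnd (j - 1) (by omega) (by omega)
        have he : j - 1 + 1 = j := by omega
        rwa [he] at this
      exact lt_trans (ih (j - 1) (by omega) (by omega) (by omega)) h4
  intro j h2 h3
  exact H (j - i - 1).toNat j (by omega) h2 h3

theorem eq_one_of_no_descent {n : ℤ} {v : Equiv.Perm ℤ} (hv : Supp n v)
    (h : ∀ i : ℤ, 1 ≤ i → i < n → ¬ v (i + 1) < v i) : v = 1 := by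
  have hmono : ∀ i : ℤ, 1 ≤ i → i < n → v i < v (i + 1) := by
    intro i h1 h2
    have hne : v i ≠ v (i + 1) := fun he => by
      have := v.injective he; omega
    have := h i h1 h2
    omega
  have key : ∀ i : ℤ, 1 ≤ i → i ≤ n → v i = i := by
    intro i h1 h2
    have hvi := mem_box hv (Finset.mem_Icc.mpr ⟨h1, h2⟩)
    rw [Finset.mem_Icc] at hvi
    have hset : ((Finset.Icc 1 n).filter fun x => v x ≤ v i) = Finset.Icc 1 i := by
      ext x
      simp only [Finset.mem_filter, Finset.mem_Icc]
      constructor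
      · rintro ⟨⟨hx1, hx2⟩, hx3⟩
        refine ⟨hx1, ?_⟩
        by_contra hc
        exact absurd hx3 (not_le.mpr (chain_lt hmono i h1 x (by omega) hx2))
      · rintro ⟨hx1, hx2⟩
        refine ⟨⟨hx1, by omega⟩, ?_⟩
        rcases eq_or_lt_of_le hx2 with rfl | hlt
        · exact le_refl _
        · exact le_of_lt (chain_lt hmono x hx1 i hlt h2)
    have hcount := count_v hv (fun x => x ≤ v i)
    rw [hset] at hcount
    have hset2 : ((Finset.Icc 1 n).filter fun x => x ≤ v i) = Finset.Icc 1 (v i) := by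
      ext x
      simp only [Finset.mem_filter, Finset.mem_Icc]
      omega
    rw [hset2] at hcount
    rw [Int.card_Icc, Int.card_Icc] at hcount
    omega
  ext i
  simp only [Equiv.Perm.coe_one, id_eq]
  by_cases hi : 1 ≤ i ∧ i ≤ n
  · exact key i hi.1 hi.2
  · exact hv i (by omega)

theorem exists_descent {n : ℤ} {v : Equiv.Perm ℤ} (hv : Supp n v) (hne : v ≠ 1) :
    ∃ i : ℤ, 1 ≤ i ∧ i < n ∧ v (i + 1) < v i := by
  by_contra h
  push_neg at h
  exact hne (eq_one_of_no_descent hv (fun i h1 h2 => not_lt.mpr (h i h1 h2)))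

/-- existence of an inversion pair for non-identity supported perms -/
theorem exists_inversion {n : ℤ} {v : Equiv.Perm ℤ} (hv : Supp n v) (hne : v ≠ 1) :
    ∃ a b : ℤ, 1 ≤ a ∧ a < b ∧ b ≤ n ∧ v b < v a := by
  obtain ⟨i, h1, h2, h3⟩ := exists_descent hv hne
  exact ⟨i, i + 1, h1, by omega, by omega, h3⟩

theorem swap_mem_AGens {n i : ℤ} (h1 : 1 ≤ i) (h2 : i < n) :
    Equiv.swap i (i + 1) ∈ AGens 1 n := ⟨i, h1, h2, rfl⟩

theorem word_ex {n : ℤ} {v : Equiv.Perm ℤ} (hv : Supp n v) :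
    ∃ l : List (Equiv.Perm ℤ), (∀ x ∈ l, x ∈ AGens 1 n) ∧ l.prod = v ∧ l.length ≤ inv n v := by
  have H : ∀ N : ℕ, ∀ v : Equiv.Perm ℤ, Supp n v → inv n v ≤ N →
      ∃ l : List (Equiv.Perm ℤ), (∀ x ∈ l, x ∈ AGens 1 n) ∧ l.prod = v ∧ l.length ≤ inv n v := by
    intro N
    induction N with
    | zero =>
      intro v hv hle
      by_cases h1 : v = 1
      · exact ⟨[], by simp, by simp [h1], by simp⟩
      · obtain ⟨i, hi1, hi2, hi3⟩ := exists_descent hv h1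
        have := lemA (n := n) (v := v) (a := i) (b := i + 1) hi1 (by omega) (by omega) hi3
        omega
    | succ N ih =>
      intro v hv hle
      by_cases h1 : v = 1
      · exact ⟨[], by simp, by simp [h1], by simp⟩
      · obtain ⟨i, hi1, hi2, hi3⟩ := exists_descent hv h1
        have hlt := lemA (n := n) (v := v) (a := i) (b := i + 1) hi1 (by omega) (by omega) hi3
        have hsupp' : Supp n (v * Equiv.swap i (i + 1)) :=
          supp_mul hv (supp_swap hi1 (by omega) (by omega))
        obtain ⟨l', hg', hp', hl'⟩ := ih _ hsupp' (by omega)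
        refine ⟨l' ++ [Equiv.swap i (i + 1)], ?_, ?_, ?_⟩
        · intro x hx
          rcases List.mem_append.mp hx with h | h
          · exact hg' x h
          · rw [List.mem_singleton.mp h]; exact swap_mem_AGens hi1 hi2
        · rw [List.prod_append, List.prod_singleton, hp', Equiv.mul_swap_mul_self]
        · rw [List.length_append, List.length_singleton]
          omega
  exact H (inv n v) v hv le_rfl

theorem inv_one (n : ℤ) : inv n 1 = 0 := by
  unfold inv
  rw [Finset.card_eq_zero]
  ext x
  simp only [Invs, Finset.mem_filter, Finset.notMem_empty, iff_false, not_and]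
  intro _ h
  simp only [Equiv.Perm.coe_one, Equiv.Perm.one_apply, id_eq] at h ⊢
  omega

theorem inv_le_length {n : ℤ} (hn : 1 ≤ n) :
    ∀ l : List (Equiv.Perm ℤ), (∀ x ∈ l, x ∈ AGens 1 n) → inv n l.prod ≤ l.length := by
  intro l
  induction l using List.reverseRecOn with
  | nil => intro _; simp [inv_one]
  | append_singleton l s ih =>
    intro hg
    obtain ⟨i, hi1, hi2, rfl⟩ := hg s (by simp)
    have h1 : inv n (l.prod * Equiv.swap i (i + 1)) ≤ inv n l.prod + 1 := by
      have := lemB (v := l.prod * Equiv.swap i (i + 1)) hi1 hi2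
      rwa [Equiv.mul_swap_mul_self] at this
    have h2 := ih (fun x hx => hg x (by simp [hx]))
    rw [List.prod_append, List.prod_singleton, List.length_append, List.length_singleton]
    omega

theorem wlen_eq_inv {n : ℤ} (hn : 1 ≤ n) {v : Equiv.Perm ℤ} (hv : Supp n v) :
    wlen (AGens 1 n) v = inv n v := by
  obtain ⟨l, hg, hp, hl⟩ := word_ex hv
  have hmem : l.length ∈ {m | ∃ l' : List (Equiv.Perm ℤ),
      l'.length = m ∧ (∀ x ∈ l', x ∈ AGens 1 n) ∧ l'.prod = v} := ⟨l, rfl, hg, hp⟩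
  apply le_antisymm
  · exact le_trans (Nat.sInf_le hmem) hl
  · obtain ⟨l0, hlen0, hg0, hp0⟩ := Nat.sInf_mem (Set.nonempty_of_mem hmem)
    rw [wlen, ← hlen0, ← hp0]
    exact inv_le_length hn l0 hg0

theorem refl_mem {n : ℤ} : ∀ a b : ℤ, 1 ≤ a → a < b → b ≤ n →
    ∃ g ∈ Subgroup.closure (AGens 1 n), ∃ s ∈ AGens 1 n, g * s * g⁻¹ = Equiv.swap a b := by
  have H : ∀ d : ℕ, ∀ a b : ℤ, 1 ≤ a → a < b → b ≤ n → b - a = (d : ℤ) + 1 →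
      ∃ g ∈ Subgroup.closure (AGens 1 n), ∃ s ∈ AGens 1 n, g * s * g⁻¹ = Equiv.swap a b := by
    intro d
    induction d with
    | zero =>
      intro a b ha hab hb hd
      have : b = a + 1 := by omega
      subst this
      exact ⟨1, Subgroup.one_mem _, Equiv.swap a (a + 1), ⟨a, ha, by omega, rfl⟩, by group⟩
    | succ m ih =>
      intro a b ha hab hb hd
      obtain ⟨g', hg', s', hs', heq⟩ := ih (a + 1) b (by omega) (by omega) hb (by omega)
      have hc : Equiv.swap a (a + 1) ∈ Subgroup.closure (AGens 1 n) :=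
        Subgroup.subset_closure ⟨a, ha, by omega, rfl⟩
      refine ⟨Equiv.swap a (a + 1) * g', Subgroup.mul_mem _ hc hg', s', hs', ?_⟩
      have h1 : (Equiv.swap a (a + 1) * g') * s' * (Equiv.swap a (a + 1) * g')⁻¹
          = Equiv.swap a (a + 1) * (g' * s' * g'⁻¹) * (Equiv.swap a (a + 1))⁻¹ := by group
      rw [h1, heq]
      have h2 := Equiv.swap_apply_apply (Equiv.swap a (a + 1)) (a + 1) b
      rw [Equiv.swap_apply_right, Equiv.swap_apply_of_ne_of_ne (by omega : b ≠ a)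
        (by omega : b ≠ a + 1)] at h2
      exact h2.symm
  intro a b ha hab hb
  exact H (b - a - 1).toNat a b ha hab hb (by omega)

theorem bruhat_antisymm {S : Set (Equiv.Perm ℤ)} {u v : Equiv.Perm ℤ}
    (h1 : bruhatLe S u v) (h2 : bruhatLe S v u) : u = v := by
  have key : ∀ x y : Equiv.Perm ℤ, bruhatLe S x y → x = y ∨ wlen S x < wlen S y := by
    intro x y h
    induction h with
    | refl => exact Or.inl rfl
    | tail _ hstep ih =>
      rcases ih with rfl | hlt
      · exact Or.inr hstep.2
      · exact Or.inr (lt_trans hlt hstep.2)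
  rcases key u v h1 with rfl | hlt1
  · rfl
  · rcases key v u h2 with rfl | hlt2
    · rfl
    · omega

noncomputable def FA (p q : ℤ) (v : Equiv.Perm ℤ) : Finset ℤ := (Finset.Icc 1 p).filter fun i => q < v i

theorem rA_eq (p q : ℤ) (v : Equiv.Perm ℤ) : rA p q v = ((FA p q v).card : ℤ) := by
  have h : {i : ℤ | 1 ≤ i ∧ i ≤ p ∧ q < v i} = ↑(FA p q v) := by
    ext i; simp [FA, Finset.mem_Icc, and_assoc]
  rw [rA, h, Set.ncard_coe_finset]

theorem count_le {n : ℤ} {v : Equiv.Perm ℤ} (hv : Supp n v) {a : ℤ} (ha : a ∈ Finset.Icc 1 n) :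
    ((Finset.Icc 1 n).filter fun x => v x ≤ v a).card = (v a).toNat := by
  rw [count_v hv (fun x => x ≤ v a)]
  have hva := mem_box hv ha
  rw [Finset.mem_Icc] at hva
  have h : ((Finset.Icc 1 n).filter fun x => x ≤ v a) = Finset.Icc 1 (v a) := by
    ext x; simp only [Finset.mem_filter, Finset.mem_Icc]; omega
  rw [h, Int.card_Icc]
  omega

theorem count_gt {n : ℤ} {v : Equiv.Perm ℤ} (hv : Supp n v) {a : ℤ} (ha : a ∈ Finset.Icc 1 n) :
    ((Finset.Icc 1 n).filter fun x => v a < v x).card = (n - v a).toNat := by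
  rw [count_v hv]
  have hva := mem_box hv ha
  rw [Finset.mem_Icc] at hva
  have h : ((Finset.Icc 1 n).filter fun x => v a < x) = Finset.Icc (v a + 1) n := by
    ext x; simp only [Finset.mem_filter, Finset.mem_Icc]; omega
  rw [h, Int.card_Icc]
  omega

theorem count_lt {n : ℤ} {v : Equiv.Perm ℤ} (hv : Supp n v) {a : ℤ} (ha : a ∈ Finset.Icc 1 n) :
    ((Finset.Icc 1 n).filter fun x => v x < v a).card = (v a - 1).toNat := by
  rw [count_v hv (fun x => x < v a)]
  have hva := mem_box hv ha
  rw [Finset.mem_Icc] at hva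
  have h : ((Finset.Icc 1 n).filter fun x => x < v a) = Finset.Icc 1 (v a - 1) := by
    ext x; simp only [Finset.mem_filter, Finset.mem_Icc]; omega
  rw [h, Int.card_Icc]
  omega

theorem gap {v : Equiv.Perm ℤ} {p : ℤ}
    (C1 : ∀ i j : ℤ, 1 ≤ i → i < j → j ≤ p → v i < v j) :
    ∀ i j : ℤ, 1 ≤ i → i ≤ j → j ≤ p → v i + (j - i) ≤ v j := by
  intro i j hi hij hj
  have H : ∀ d : ℕ, ∀ j : ℤ, j - i = (d : ℤ) → i ≤ j → j ≤ p → v i + (j - i) ≤ v j := by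
    intro d
    induction d with
    | zero =>
      intro j h1 _ _
      have : j = i := by omega
      subst this; omega
    | succ m ih =>
      intro j h1 h2 h3
      have h4 := ih (j - 1) (by omega) (by omega) (by omega)
      have h5 : v (j - 1) < v j := by
        have := C1 (j - 1) j (by omega) (by omega) h3
        exact this
      omega
  exact H (j - i).toNat j (by omega) hij hj

/-- rank is preserved by swaps within [1,p] or within (p,n] -/
theorem rank_swap_in {p q a b : ℤ} {v : Equiv.Perm ℤ} (ha : 1 ≤ a) (hab : a < b) (hb : b ≤ p) :
    (FA p q (v * Equiv.swap a b)).card = (FA p q v).card := by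
  unfold FA
  have h : ∀ i ∈ Finset.Icc 1 p, Equiv.swap a b i ∈ Finset.Icc 1 p := by
    intro i hi
    rw [Finset.mem_Icc] at *
    rw [Equiv.swap_apply_def]
    split_ifs <;> omega
  have := count_perm (σ := Equiv.swap a b) h (fun x => q < v x)
  simp only [Equiv.Perm.mul_apply]
  exact this

theorem rank_swap_out {p q a b : ℤ} {v : Equiv.Perm ℤ} (ha : p < a) (hab : a < b) :
    FA p q (v * Equiv.swap a b) = FA p q v := by
  unfold FA
  apply Finset.filter_congr
  intro i hi
  rw [Finset.mem_Icc] at hi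
  rw [Equiv.Perm.mul_apply, Equiv.swap_apply_of_ne_of_ne (by omega) (by omega)]

theorem rank_swap_cross {p q a b : ℤ} {v : Equiv.Perm ℤ} (ha : a ≤ p) (hb : p < b)
    (hiff : q < v b ↔ q < v a) :
    FA p q (v * Equiv.swap a b) = FA p q v := by
  unfold FA
  apply Finset.filter_congr
  intro i hi
  rw [Finset.mem_Icc] at hi
  rw [Equiv.Perm.mul_apply]
  by_cases hia : i = a
  · subst hia
    rw [Equiv.swap_apply_left]
    exact hiff
  · rw [Equiv.swap_apply_of_ne_of_ne hia (by omega)]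

theorem rank_swap_drop {p q a b : ℤ} {v : Equiv.Perm ℤ} (hab : a < b) :
    (FA p q v).card ≤ (FA p q (v * Equiv.swap a b)).card + 1 := by
  by_cases hb : b ≤ p
  · rcases lt_or_ge 0 a with ha | ha
    · rw [rank_swap_in (by omega) hab hb]
      omega
    · -- a ≤ 0 : a ∉ Icc 1 p, swap fixes all i with 1 ≤ i except b; treat directly
      have h : FA p q v ⊆ insert b (FA p q (v * Equiv.swap a b)) := by
        intro i hi
        unfold FA at *
        rw [Finset.mem_filter, Finset.mem_Icc] at hi
        rcases eq_or_ne i b with rfl | hib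
        · exact Finset.mem_insert_self _ _
        · apply Finset.mem_insert_of_mem
          rw [Finset.mem_filter, Finset.mem_Icc]
          refine ⟨⟨hi.1.1, hi.1.2⟩, ?_⟩
          rw [Equiv.Perm.mul_apply, Equiv.swap_apply_of_ne_of_ne (by omega) hib]
          exact hi.2
      calc (FA p q v).card ≤ (insert b (FA p q (v * Equiv.swap a b))).card :=
            Finset.card_le_card h
        _ ≤ (FA p q (v * Equiv.swap a b)).card + 1 := Finset.card_insert_le _ _
  · by_cases ha : p < a
    · rw [rank_swap_out ha hab]
      omega
    · -- a ≤ p < b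
      have h : FA p q v ⊆ insert a (FA p q (v * Equiv.swap a b)) := by
        intro i hi
        unfold FA at *
        rw [Finset.mem_filter, Finset.mem_Icc] at hi
        rcases eq_or_ne i a with rfl | hia
        · exact Finset.mem_insert_self _ _
        · apply Finset.mem_insert_of_mem
          rw [Finset.mem_filter, Finset.mem_Icc]
          refine ⟨⟨hi.1.1, hi.1.2⟩, ?_⟩
          rw [Equiv.Perm.mul_apply, Equiv.swap_apply_of_ne_of_ne hia (by omega)]
          exact hi.2
      calc (FA p q v).card ≤ (insert a (FA p q (v * Equiv.swap a b))).card :=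
            Finset.card_le_card h
        _ ≤ (FA p q (v * Equiv.swap a b)).card + 1 := Finset.card_insert_le _ _

section Classify
variable {n k p q : ℤ} {v : Equiv.Perm ℤ}
  (hk : 0 < k) (hp : 0 < p) (hq : 0 < q) (hkp : k ≤ p) (hkq : p - q < k) (hn : q + k ≤ n)
  (hv : Supp n v)
  (hrank : ((FA p q v).card : ℤ) = k)
  (C1 : ∀ i j : ℤ, 1 ≤ i → i < j → j ≤ p → v i < v j)
  (C2 : ∀ i j : ℤ, p < i → i < j → j ≤ n → v i < v j)
  (C3 : ∀ a b : ℤ, 1 ≤ a → a ≤ p → p < b → b ≤ n → (v a ≤ q ∨ q < v b) → v a < v b)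

include hk hp hq hkp hkq hn hv hrank C1 in
theorem step1a : ∀ i : ℤ, 1 ≤ i → i ≤ p - k → v i ≤ q := by
  intro i hi1 hi2
  by_contra hc
  push_neg at hc
  have hsub : Finset.Icc i p ⊆ FA p q v := by
    intro j hj
    rw [Finset.mem_Icc] at hj
    rw [FA, Finset.mem_filter, Finset.mem_Icc]
    refine ⟨⟨by omega, hj.2⟩, ?_⟩
    rcases eq_or_lt_of_le hj.1 with rfl | hlt
    · exact hc
    · exact lt_trans hc (C1 i j hi1 hlt hj.2)
  have := Finset.card_le_card hsub
  rw [Int.card_Icc] at this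
  omega

include hk hp hq hkp hkq hn hv hrank C1 in
theorem step1b : ∀ i : ℤ, p - k < i → i ≤ p → q < v i := by
  intro i hi1 hi2
  by_contra hc
  push_neg at hc
  have hsub : FA p q v ⊆ Finset.Icc (i + 1) p := by
    intro j hj
    rw [FA, Finset.mem_filter, Finset.mem_Icc] at hj
    rw [Finset.mem_Icc]
    refine ⟨?_, hj.1.2⟩
    by_contra hc2
    push_neg at hc2
    rcases eq_or_lt_of_le (by omega : j ≤ i) with rfl | hlt
    · omega
    · have := C1 j i hj.1.1 hlt hi2
      omega
  have := Finset.card_le_card hsub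
  rw [Int.card_Icc] at this
  omega

include hk hp hq hkp hkq hn hv hrank C1 C3 in
theorem step2 : ∀ a : ℤ, 1 ≤ a → a ≤ p - k → v a = a := by
  intro a ha1 ha2
  have hpn : p < n := by omega
  have hab : a ∈ Finset.Icc 1 n := Finset.mem_Icc.mpr ⟨ha1, by omega⟩
  have hva : v a ≤ q := step1a hk hp hq hkp hkq hn hv hrank C1 a ha1 ha2
  have hset : ((Finset.Icc 1 n).filter fun x => v x ≤ v a) = Finset.Icc 1 a := by
    ext x
    simp only [Finset.mem_filter, Finset.mem_Icc]
    constructor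
    · rintro ⟨⟨hx1, hx2⟩, hx3⟩
      refine ⟨hx1, ?_⟩
      by_contra hc
      push_neg at hc
      rcases le_or_gt x p with hxp | hxp
      · exact absurd hx3 (not_le.mpr (C1 a x ha1 hc hxp))
      · exact absurd hx3 (not_le.mpr (C3 a x ha1 (by omega) hxp hx2 (Or.inl hva)))
    · rintro ⟨hx1, hx2⟩
      refine ⟨⟨hx1, by omega⟩, ?_⟩
      rcases eq_or_lt_of_le hx2 with rfl | hlt
      · exact le_refl _
      · exact le_of_lt (C1 x a hx1 hlt (by omega))
  have hcount := count_le hv hab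
  rw [hset, Int.card_Icc] at hcount
  rw [Finset.mem_Icc] at hab
  have := mem_box hv (Finset.mem_Icc.mpr ⟨ha1, by omega⟩)
  rw [Finset.mem_Icc] at this
  omega

include hk hp hq hkp hkq hn hv hrank C1 C2 C3 in
theorem gcard : ((Finset.Ioc p n).filter fun x => q < v x).card = (n - q - k).toNat := by
  have hpn : p < n := by omega
  have htot := count_v hv (fun x => q < x)
  have h1 : ((Finset.Icc 1 n).filter fun x => q < x) = Finset.Icc (q + 1) n := by
    ext x; simp only [Finset.mem_filter, Finset.mem_Icc]; omega
  rw [h1, Int.card_Icc] at htot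
  have hsplit : Finset.Icc (1 : ℤ) n = Finset.Icc 1 p ∪ Finset.Ioc p n := by
    ext x
    simp only [Finset.mem_Icc, Finset.mem_union, Finset.mem_Ioc]
    omega
  have hdisj : Disjoint ((Finset.Icc 1 p).filter fun x => q < v x)
      ((Finset.Ioc p n).filter fun x => q < v x) := by
    apply Finset.disjoint_filter_filter
    rw [Finset.disjoint_left]
    intro x hx1 hx2
    rw [Finset.mem_Icc] at hx1
    rw [Finset.mem_Ioc] at hx2
    omega
  rw [hsplit, Finset.filter_union] at htot
  rw [Finset.card_union_of_disjoint hdisj] at htot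
  have : ((Finset.Icc 1 p).filter fun x => q < v x).card = k.toNat := by
    have : (FA p q v).card = k.toNat := by omega
    exact this
  omega

include hk hp hq hkp hkq hn hv hrank C1 C2 C3 in
theorem step3 : ∀ a : ℤ, p - k < a → a ≤ p → v a = q + (a - (p - k)) := by
  intro a ha1 ha2
  have hpn : p < n := by omega
  have hab : a ∈ Finset.Icc 1 n := Finset.mem_Icc.mpr ⟨by omega, by omega⟩
  -- lower bound
  have hlow : q + (a - (p - k)) ≤ v a := by
    have h1 : q < v (p - k + 1) :=
      step1b hk hp hq hkp hkq hn hv hrank C1 (p - k + 1) (by omega) (by omega)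
    have h2 := gap C1 (p - k + 1) a (by omega) (by omega) ha2
    omega
  -- upper bound
  have hsub : (Finset.Ioc a p ∪ (Finset.Ioc p n).filter fun x => q < v x) ⊆
      (Finset.Icc 1 n).filter fun x => v a < v x := by
    intro x hx
    rw [Finset.mem_union] at hx
    rw [Finset.mem_filter, Finset.mem_Icc]
    rcases hx with hx | hx
    · rw [Finset.mem_Ioc] at hx
      exact ⟨⟨by omega, by omega⟩, C1 a x (by omega) hx.1 hx.2⟩
    · rw [Finset.mem_filter, Finset.mem_Ioc] at hx
      exact ⟨⟨by omega, hx.1.2⟩, C3 a x (by omega) ha2 hx.1.1 hx.1.2 (Or.inr hx.2)⟩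
  have hdisj : Disjoint (Finset.Ioc a p) ((Finset.Ioc p n).filter fun x => q < v x) := by
    rw [Finset.disjoint_left]
    intro x hx1 hx2
    rw [Finset.mem_Ioc] at hx1
    rw [Finset.mem_filter, Finset.mem_Ioc] at hx2
    omega
  have hcard := Finset.card_le_card hsub
  rw [Finset.card_union_of_disjoint hdisj, count_gt hv hab,
    gcard hk hp hq hkp hkq hn hv hrank C1 C2 C3, Int.card_Ioc] at hcard
  have hvab := mem_box hv hab
  rw [Finset.mem_Icc] at hvab
  omega

include hk hp hq hkp hkq hn hv hrank C1 C2 C3 in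
theorem step4hi : ∀ b : ℤ, p < b → b ≤ n → q < v b → v b = b := by
  intro b hb1 hb2 hvb
  have hbb : b ∈ Finset.Icc 1 n := Finset.mem_Icc.mpr ⟨by omega, hb2⟩
  have hset : ((Finset.Icc 1 n).filter fun x => v b < v x) = Finset.Ioc b n := by
    ext x
    simp only [Finset.mem_filter, Finset.mem_Icc, Finset.mem_Ioc]
    constructor
    · rintro ⟨⟨hx1, hx2⟩, hx3⟩
      refine ⟨?_, hx2⟩
      by_contra hc
      push_neg at hc
      rcases le_or_gt x p with hxp | hxp
      · exact absurd hx3 (not_lt.mpr (le_of_lt (C3 x b hx1 hxp hb1 hb2 (Or.inr hvb))))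
      · rcases eq_or_lt_of_le hc with rfl | hlt
        · omega
        · exact absurd hx3 (not_lt.mpr (le_of_lt (C2 x b hxp hlt hb2)))
    · rintro ⟨hx1, hx2⟩
      exact ⟨⟨by omega, hx2⟩, C2 b x hb1 hx1 hx2⟩
  have hcount := count_gt hv hbb
  rw [hset, Int.card_Ioc] at hcount
  have hvbb := mem_box hv hbb
  rw [Finset.mem_Icc] at hvbb
  omega

include hk hp hq hkp hkq hn hv hrank C1 C2 C3 in
theorem step4lo : ∀ b : ℤ, p < b → b ≤ n → v b ≤ q → v b = b - k := by
  intro b hb1 hb2 hvb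
  have hbb : b ∈ Finset.Icc 1 n := Finset.mem_Icc.mpr ⟨by omega, hb2⟩
  have hset : ((Finset.Icc 1 n).filter fun x => v x < v b) =
      Finset.Icc 1 (p - k) ∪ Finset.Ioo p b := by
    ext x
    simp only [Finset.mem_filter, Finset.mem_Icc, Finset.mem_union, Finset.mem_Ioo,
      Finset.mem_Icc]
    constructor
    · rintro ⟨⟨hx1, hx2⟩, hx3⟩
      rcases le_or_gt x p with hxp | hxp
      · left
        refine ⟨hx1, ?_⟩
        by_contra hc
        push_neg at hc
        have := step1b hk hp hq hkp hkq hn hv hrank C1 x hc hxp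
        omega
      · right
        refine ⟨hxp, ?_⟩
        by_contra hc
        push_neg at hc
        rcases eq_or_lt_of_le hc with rfl | hlt
        · omega
        · exact absurd hx3 (not_lt.mpr (le_of_lt (C2 b x hb1 hlt hx2)))
    · rintro (⟨hx1, hx2⟩ | ⟨hx1, hx2⟩)
      · have hvx : v x ≤ q := step1a hk hp hq hkp hkq hn hv hrank C1 x hx1 hx2
        exact ⟨⟨hx1, by omega⟩, C3 x b hx1 (by omega) hb1 hb2 (Or.inl hvx)⟩
      · exact ⟨⟨by omega, by omega⟩, C2 x b hx1 hx2 hb2⟩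
  have hcount := count_lt hv hbb
  have hdisj : Disjoint (Finset.Icc (1 : ℤ) (p - k)) (Finset.Ioo p b) := by
    rw [Finset.disjoint_left]
    intro x hx1 hx2
    rw [Finset.mem_Icc] at hx1
    rw [Finset.mem_Ioo] at hx2
    omega
  rw [hset, Finset.card_union_of_disjoint hdisj, Int.card_Icc, Int.card_Ioo] at hcount
  have hvbb := mem_box hv hbb
  rw [Finset.mem_Icc] at hvbb
  omega

include hk hp hq hkp hkq hn hv hrank C1 C2 C3 in
theorem classify : ∀ i : ℤ, v i = vAfun k p q i := by
  intro i
  unfold vAfun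
  by_cases h1 : i < 1 ∨ n < i
  · have := hv i h1
    rw [this]
    split_ifs <;> omega
  · push_neg at h1
    obtain ⟨hi1, hi2⟩ := h1
    rcases le_or_gt i (p - k) with hc1 | hc1
    · rw [if_pos hc1]
      exact step2 hk hp hq hkp hkq hn hv hrank C1 C3 i hi1 hc1
    · rcases le_or_gt i p with hc2 | hc2
      · rw [if_neg (by omega), if_pos hc2]
        exact step3 hk hp hq hkp hkq hn hv hrank C1 C2 C3 i hc1 hc2
      · rcases le_or_gt i (q + k) with hc3 | hc3
        · rw [if_neg (by omega), if_neg (by omega), if_pos hc3]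
          -- show v i ≤ q then apply step4lo
          have hvle : v i ≤ q := by
            by_contra hc
            push_neg at hc
            have hvi : v i = i := step4hi hk hp hq hkp hkq hn hv hrank C1 C2 C3 i hc2 hi2 hc
            have hqi : q < i := by omega
            set a := p - k + (i - q) with hadef
            have hva : v a = q + (a - (p - k)) :=
              step3 hk hp hq hkp hkq hn hv hrank C1 C2 C3 a (by omega) (by omega)
            have : v a = v i := by rw [hva, hvi]; omega
            have := v.injective this
            omega
          exact step4lo hk hp hq hkp hkq hn hv hrank C1 C2 C3 i hc2 hi2 hvle
        · rw [if_neg (by omega), if_neg (by omega), if_neg (by omega)]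
          by_contra hc
          have hvle : v i ≤ q := by
            by_contra hq2
            push_neg at hq2
            exact hc (step4hi hk hp hq hkp hkq hn hv hrank C1 C2 C3 i hc2 hi2 hq2)
          have := step4lo hk hp hq hkp hkq hn hv hrank C1 C2 C3 i hc2 hi2 hvle
          omega
end Classify

section Main
variable {n k p q : ℤ}

theorem select (hk : 0 < k) (hp : 0 < p) (hq : 0 < q) (hkp : k ≤ p) (hkq : p - q < k)
    (hn : q + k ≤ n) {v : Equiv.Perm ℤ} (hv : Supp n v)
    (hrank : k ≤ ((FA p q v).card : ℤ)) (hne : ¬ ∀ i : ℤ, v i = vAfun k p q i) :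
    ∃ a b : ℤ, 1 ≤ a ∧ a < b ∧ b ≤ n ∧ v b < v a ∧
      k ≤ ((FA p q (v * Equiv.swap a b)).card : ℤ) := by
  rcases eq_or_lt_of_le hrank with heq | hlt
  · -- exact rank k : use classification
    by_contra hno
    push_neg at hno
    have hC1 : ∀ i j : ℤ, 1 ≤ i → i < j → j ≤ p → v i < v j := by
      intro i j h1 h2 h3
      by_cases hij : v j < v i
      · have := hno i j h1 h2 (by omega) hij
        rw [rank_swap_in h1 h2 h3] at this
        omega
      · have hne2 : v i ≠ v j := fun he => by have := v.injective he; omega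
        omega
    have hC2 : ∀ i j : ℤ, p < i → i < j → j ≤ n → v i < v j := by
      intro i j h1 h2 h3
      by_cases hij : v j < v i
      · have := hno i j (by omega) h2 h3 hij
        rw [rank_swap_out h1 h2] at this
        omega
      · have hne2 : v i ≠ v j := fun he => by have := v.injective he; omega
        omega
    have hC3 : ∀ a b : ℤ, 1 ≤ a → a ≤ p → p < b → b ≤ n → (v a ≤ q ∨ q < v b) → v a < v b := by
      intro a b h1 h2 h3 h4 hd
      by_cases hab : v b < v a
      · have hiff : q < v b ↔ q < v a := by
          rcases hd with hd | hd
          · constructor <;> intro <;> omega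
          · constructor <;> intro <;> omega
        have := hno a b h1 (by omega) h4 hab
        rw [rank_swap_cross h2 h3 hiff] at this
        omega
      · have hne2 : v a ≠ v b := fun he => by have := v.injective he; omega
        omega
    exact hne (classify hk hp hq hkp hkq hn hv heq.symm hC1 hC2 hC3)
  · -- rank > k : any inversion works
    have hv1 : v ≠ 1 := by
      rintro rfl
      have h1 : FA p q 1 = Finset.Icc (q + 1) p := by
        ext x
        rw [FA, Finset.mem_filter]
        simp only [FA, Finset.mem_filter, Finset.mem_Icc, Equiv.Perm.coe_one, id_eq]
        omega
      rw [h1, Int.card_Icc] at hlt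
      omega
    obtain ⟨a, b, ha, hab, hb, hvab⟩ := exists_inversion hv hv1
    have := rank_swap_drop (p := p) (q := q) (v := v) hab
    exact ⟨a, b, ha, hab, hb, hvab, by push_cast; omega⟩

theorem chain_main (hk : 0 < k) (hp : 0 < p) (hq : 0 < q) (hkp : k ≤ p) (hkq : p - q < k)
    (hn : q + k ≤ n) (v0 : Equiv.Perm ℤ) (hv0 : ∀ i : ℤ, v0 i = vAfun k p q i) :
    ∀ N : ℕ, ∀ v : Equiv.Perm ℤ, Supp n v → k ≤ ((FA p q v).card : ℤ) → inv n v ≤ N →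
      bruhatLe (AGens 1 n) v0 v := by
  have hn1 : (1 : ℤ) ≤ n := by omega
  intro N
  induction N with
  | zero =>
    intro v hv hrank hN
    by_cases hvv : ∀ i : ℤ, v i = vAfun k p q i
    · have : v0 = v := Equiv.ext fun i => (hv0 i).trans (hvv i).symm
      rw [this]
      exact Relation.ReflTransGen.refl
    · obtain ⟨a, b, ha, hab, hb, hvab, _⟩ := select hk hp hq hkp hkq hn hv hrank hvv
      have := lemA ha hab hb hvab
      omega
  | succ N ih =>
    intro v hv hrank hN
    by_cases hvv : ∀ i : ℤ, v i = vAfun k p q i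
    · have : v0 = v := Equiv.ext fun i => (hv0 i).trans (hvv i).symm
      rw [this]
      exact Relation.ReflTransGen.refl
    · obtain ⟨a, b, ha, hab, hb, hvab, hrank'⟩ := select hk hp hq hkp hkq hn hv hrank hvv
      have hlt := lemA ha hab hb hvab
      have hsupp' : Supp n (v * Equiv.swap a b) :=
        supp_mul hv (supp_swap ha (by omega) hb)
      have ih' := ih (v * Equiv.swap a b) hsupp' hrank' (by omega)
      apply Relation.ReflTransGen.tail ih'
      constructor
      · obtain ⟨g, hg, s, hs, hgs⟩ := refl_mem a b ha hab hb
        exact ⟨g, hg, s, hs, by rw [hgs, Equiv.mul_swap_mul_self]⟩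
      · rw [wlen_eq_inv hn1 hsupp', wlen_eq_inv hn1 hv]
        exact hlt

end Main

end S12

theorem stmt12 (n k p q : ℤ) (hk : 0 < k) (hp : 0 < p) (hq : 0 < q)
    (hkp : k ≤ p) (hkq : p - q < k) (hn : q + k ≤ n)
    (v0 : Equiv.Perm ℤ) (hv0 : ∀ i : ℤ, v0 i = vAfun k p q i) :
    k ≤ rA p q v0 ∧
    (∀ v : Equiv.Perm ℤ, (∀ i : ℤ, i < 1 ∨ n < i → v i = i) → k ≤ rA p q v →
      bruhatLe (AGens 1 n) v0 v) ∧
    (∀ v1 : Equiv.Perm ℤ, (∀ i : ℤ, i < 1 ∨ n < i → v1 i = i) → k ≤ rA p q v1 →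
      (∀ v : Equiv.Perm ℤ, (∀ i : ℤ, i < 1 ∨ n < i → v i = i) → k ≤ rA p q v →
        bruhatLe (AGens 1 n) v1 v) →
      v1 = v0) := by
  have hsuppv0 : S12.Supp n v0 := by
    intro i hi
    rw [hv0 i]
    unfold vAfun
    split_ifs <;> omega
  have hrank0 : (S12.FA p q v0).card = k.toNat := by
    have h1 : S12.FA p q v0 = Finset.Icc (p - k + 1) p := by
      ext i
      simp only [S12.FA, Finset.mem_filter, Finset.mem_Icc]
      rw [hv0 i]
      unfold vAfun
      split_ifs <;> omega
    rw [h1, Int.card_Icc]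
    omega
  have part1 : k ≤ rA p q v0 := by
    rw [S12.rA_eq, hrank0]
    omega
  have part2 : ∀ v : Equiv.Perm ℤ, (∀ i : ℤ, i < 1 ∨ n < i → v i = i) → k ≤ rA p q v →
      bruhatLe (AGens 1 n) v0 v := by
    intro v hs hr
    rw [S12.rA_eq] at hr
    exact S12.chain_main hk hp hq hkp hkq hn v0 hv0 (S12.inv n v) v hs hr le_rfl
  refine ⟨part1, part2, ?_⟩
  intro v1 hs1 hr1 hmin
  exact S12.bruhat_antisymm (hmin v0 (fun i hi => hsuppv0 i hi) part1) (part2 v1 hs1 hr1)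
end

section
/- For two basic permutations v(k,p,q) and v(k',p',q') in S_n, we have v(k',p',q') ≥ v(k,p,q) in Bruhat order if and only if r_{v(k',p',q')}(p,q) ≥ k, where r_v(p,q) = #{i ≤ p : v(i) > q}. -/
/-!
Inside `Perm ℤ`, `S_n` is the group of permutations fixing everything outside `{1, …, n}`.
There the word length in adjacent transpositions is the number of inversions, so a Bruhat
step is a right multiplication `w ⟶ w (a b)` with `a < b` and `w a < w b`, which can only
increase every rank `r_w(P, Q)`. Conversely, if every rank of `u` is at most that of `v ≠ u`,
let `i` be the first position where they differ and `j > i` the first position with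
`u i ≤ v j < v i`: then `v (i j)` still dominates `u` in every rank and has fewer inversions.
This is the tableau criterion `u ≤ v ↔ r_u ≤ r_v`.

For the basic permutation, `r_{v(k,p,q)}(p, q) = k`, and `r_{v(k,p,q)}(P, Q)` is at most the
largest of the bounds `0`, `P - max Q 0` and `k - max (p - P) 0 - max (Q - q) 0`, which hold
for every `w` with `r_w(p, q) ≥ k`.
-/

open Equiv Finset

namespace BruhatA

abbrev permIcc (n : ℤ) : Subgroup (Perm ℤ) := fixingSubgroup (Perm ℤ) (Set.Icc 1 n)ᶜ

variable {n : ℤ} {w : Perm ℤ}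

lemma apply_eq_self_of_mem_permIcc (hw : w ∈ permIcc n) {m : ℤ} (hm : m < 1 ∨ n < m) :
    w m = m :=
  (mem_fixingSubgroup_iff (Perm ℤ)).1 hw m (by simp only [Set.mem_compl_iff, Set.mem_Icc]; omega)

lemma apply_cases_of_mem_permIcc (hw : w ∈ permIcc n) (m : ℤ) :
    (m < 1 ∧ w m = m) ∨ (1 ≤ m ∧ m ≤ n ∧ 1 ≤ w m ∧ w m ≤ n) ∨ (n < m ∧ w m = m) := by
  by_cases hm : 1 ≤ m ∧ m ≤ n
  · by_cases hwm : 1 ≤ w m ∧ w m ≤ n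
    · exact Or.inr (Or.inl ⟨hm.1, hm.2, hwm⟩)
    · have := w.injective (apply_eq_self_of_mem_permIcc hw (m := w m) (by omega))
      omega
  · have := apply_eq_self_of_mem_permIcc hw (m := m) (by omega)
    omega

lemma apply_pos_of_mem_permIcc (hw : w ∈ permIcc n) {m : ℤ} (hm : 0 < m) : 0 < w m := by
  rcases apply_cases_of_mem_permIcc hw m with h | h | h <;> omega

lemma swap_mem_permIcc {a b : ℤ} (ha : 1 ≤ a ∧ a ≤ n) (hb : 1 ≤ b ∧ b ≤ n) :
    swap a b ∈ permIcc n :=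
  (mem_fixingSubgroup_iff (Perm ℤ)).2 fun m hm => by
    simp only [Set.mem_compl_iff, Set.mem_Icc] at hm
    exact swap_apply_of_ne_of_ne (by rintro rfl; exact hm ha) (by rintro rfl; exact hm hb)

lemma AGens_subset_permIcc : AGens 1 n ⊆ permIcc n := by
  rintro _ ⟨i, hi, hin, rfl⟩
  exact swap_mem_permIcc ⟨hi, by omega⟩ ⟨by omega, by omega⟩

lemma swap_add_one_mem_AGens {i : ℤ} (hi : 1 ≤ i) (hin : i < n) :
    swap i (i + 1) ∈ AGens 1 n :=
  ⟨i, hi, hin, rfl⟩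

def invSet (w : Perm ℤ) : Set (ℤ × ℤ) := {x | x.1 < x.2 ∧ w x.2 < w x.1}

noncomputable def nInv (w : Perm ℤ) : ℕ := (invSet w).ncard

lemma invSet_finite (hw : w ∈ permIcc n) : (invSet w).Finite := by
  refine ((Set.finite_Icc 1 n).prod (Set.finite_Icc 1 n)).subset ?_
  rintro ⟨i, l⟩ ⟨hil, hwil⟩
  dsimp only at hil hwil
  simp only [Set.mem_prod, Set.mem_Icc]
  rcases apply_cases_of_mem_permIcc hw i with hi | hi | hi <;>
    rcases apply_cases_of_mem_permIcc hw l with hl | hl | hl <;> omega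

lemma nInv_one : nInv 1 = 0 := by
  have : invSet 1 = ∅ := Set.eq_empty_of_forall_notMem fun x hx => lt_asymm hx.1 hx.2
  simp [nInv, this]

section Adjacent

variable {j : ℤ}

lemma swap_add_one_lt_swap_add_one {i l : ℤ} (hil : i < l) (hne : ¬(i = j ∧ l = j + 1)) :
    swap j (j + 1) i < swap j (j + 1) l := by
  simp only [swap_apply_def]
  split_ifs <;> omega

lemma invSet_mul_swap_add_one_subset (w : Perm ℤ) (j : ℤ) :
    invSet (w * swap j (j + 1)) ⊆
      Prod.map (swap j (j + 1)) (swap j (j + 1)) '' invSet w ∪ {(j, j + 1)} := by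
  rintro ⟨i, l⟩ ⟨hil, hwil⟩
  by_cases hij : i = j ∧ l = j + 1
  · simp [hij]
  · refine Or.inl ⟨(swap j (j + 1) i, swap j (j + 1) l),
      ⟨swap_add_one_lt_swap_add_one hil hij, hwil⟩, ?_⟩
    simp

lemma nInv_mul_swap_add_one_le (hf : (invSet w).Finite) :
    nInv (w * swap j (j + 1)) ≤ nInv w + 1 := by
  calc nInv (w * swap j (j + 1))
      ≤ (Prod.map (swap j (j + 1)) (swap j (j + 1)) '' invSet w ∪ {(j, j + 1)}).ncard :=
        Set.ncard_le_ncard (invSet_mul_swap_add_one_subset w j)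
          ((hf.image _).union (Set.finite_singleton _))
    _ ≤ (Prod.map (swap j (j + 1)) (swap j (j + 1)) '' invSet w).ncard + 1 :=
        Set.ncard_union_le _ _ |>.trans (by rw [Set.ncard_singleton])
    _ ≤ nInv w + 1 := by gcongr; exact Set.ncard_image_le hf

lemma invSet_mul_swap_add_one_finite (hf : (invSet w).Finite) :
    (invSet (w * swap j (j + 1))).Finite :=
  ((hf.image _).union (Set.finite_singleton _)).subset (invSet_mul_swap_add_one_subset w j)

lemma nInv_mul_swap_add_one_of_lt (hf : (invSet w).Finite) (h : w j < w (j + 1)) :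
    nInv (w * swap j (j + 1)) = nInv w + 1 := by
  set s := swap j (j + 1)
  have hset : invSet (w * s) = Prod.map s s '' invSet w ∪ {(j, j + 1)} := by
    refine (invSet_mul_swap_add_one_subset w j).antisymm ?_
    rintro _ (⟨⟨i, l⟩, ⟨hil, hwil⟩, rfl⟩ | hx)
    · dsimp only at hil hwil
      have hne : ¬(i = j ∧ l = j + 1) := by rintro ⟨rfl, rfl⟩; omega
      exact ⟨swap_add_one_lt_swap_add_one hil hne, by simpa [s] using hwil⟩
    · obtain rfl := Set.mem_singleton_iff.1 hx
      exact ⟨by simp, by simpa [s] using h⟩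
  have hnot : (j, j + 1) ∉ Prod.map s s '' invSet w := by
    rintro ⟨⟨i, l⟩, ⟨hil, -⟩, hx⟩
    simp only [Prod.map, Prod.mk.injEq, s, swap_apply_def] at hx hil
    split_ifs at hx <;> omega
  rw [nInv, hset, Set.ncard_union_eq (Set.disjoint_singleton_right.2 hnot)
    (hf.image _) (Set.finite_singleton _),
    Set.ncard_image_of_injective _ (s.injective.prodMap s.injective), Set.ncard_singleton, nInv]

lemma nInv_mul_swap_add_one_of_gt (hf : (invSet w).Finite) (h : w (j + 1) < w j) :
    nInv (w * swap j (j + 1)) + 1 = nInv w := by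
  have := nInv_mul_swap_add_one_of_lt (j := j) (invSet_mul_swap_add_one_finite (j := j) hf)
    (by simp only [Perm.mul_apply, swap_apply_left, swap_apply_right]; exact h)
  rwa [mul_swap_mul_self, eq_comm] at this

end Adjacent

lemma swap_eq_conj_swap {a c : ℤ} (hac : a < c) :
    swap a (c + 1) = swap c (c + 1) * swap a c * swap c (c + 1) := by
  have := swap_apply_apply (swap c (c + 1)) a c
  rwa [swap_apply_left, swap_apply_of_ne_of_ne (by omega) (by omega), swap_inv] at this

lemma nInv_mul_swap_lt (hw : w ∈ permIcc n) {a b : ℤ} (ha : 1 ≤ a) (hab : a < b) (hb : b ≤ n)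
    (h : w b < w a) : nInv (w * swap a b) < nInv w := by
  induction b, hab using Int.leInduction generalizing w with
  | base =>
    have := nInv_mul_swap_add_one_of_gt (invSet_finite hw) h
    omega
  | succ c hac ih =>
    -- `(a, c+1) = t (a, c) t` with `t = (c, c+1)`, and each `t` moves the inversion count by one
    set t := swap c (c + 1)
    have ht : t ∈ permIcc n := swap_mem_permIcc ⟨by omega, by omega⟩ ⟨by omega, hb⟩
    have hwt : w * t ∈ permIcc n := mul_mem hw ht
    have hu : w * t * swap a c ∈ permIcc n :=
      mul_mem hwt (swap_mem_permIcc ⟨ha, by omega⟩ ⟨by omega, by omega⟩)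
    have hta : t a = a := swap_apply_of_ne_of_ne (by omega) (by omega)
    have hIH : nInv (w * t * swap a c) < nInv (w * t) :=
      ih hwt (by omega) (by simpa [t, hta] using h)
    have heq : w * swap a (c + 1) = w * t * swap a c * t := by
      rw [swap_eq_conj_swap (by omega : a < c)]; simp only [t, mul_assoc]
    rw [heq]
    rcases lt_or_gt_of_ne (w.injective.ne (by omega : c ≠ c + 1)) with hc | hc
    · have hw1 : nInv (w * t) = nInv w + 1 := nInv_mul_swap_add_one_of_lt (invSet_finite hw) hc
      have hu1 : nInv (w * t * swap a c * t) + 1 = nInv (w * t * swap a c) :=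
        nInv_mul_swap_add_one_of_gt (invSet_finite hu) (by
          simp only [Perm.mul_apply, swap_apply_right, t, hta,
            swap_apply_of_ne_of_ne (by omega : c + 1 ≠ a) (by omega : c + 1 ≠ c)]
          omega)
      omega
    · have hw1 : nInv (w * t) + 1 = nInv w := nInv_mul_swap_add_one_of_gt (invSet_finite hw) hc
      have hu1 : nInv (w * t * swap a c * t) ≤ nInv (w * t * swap a c) + 1 :=
        nInv_mul_swap_add_one_le (invSet_finite hu)
      omega

lemma eq_one_of_forall_lt_apply_add_one (h : ∀ j, w j < w (j + 1)) (h0 : w 0 = 0) : w = 1 := by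
  have hmono : StrictMono w := strictMono_int_of_lt_succ h
  have hsucc : ∀ j, w (j + 1) = w j + 1 := fun j => by
    by_contra hne
    obtain ⟨x, hx⟩ := w.surjective (w j + 1)
    have h1 : j < x := hmono.lt_iff_lt.1 (by omega)
    have h2 : x < j + 1 := hmono.lt_iff_lt.1 (by have := h j; omega)
    omega
  ext i
  simp only [Perm.one_apply]
  induction i using Int.induction_on with
  | zero => exact h0
  | succ i ih => rw [hsucc, ih]
  | pred i ih =>
    have := hsucc (-(i : ℤ) - 1)
    rw [sub_add_cancel] at this
    omega

lemma exists_descent (hw : w ∈ permIcc n) (hne : w ≠ 1) :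
    ∃ j, 1 ≤ j ∧ j < n ∧ w (j + 1) < w j := by
  by_contra! hno
  refine hne (eq_one_of_forall_lt_apply_add_one (fun j => ?_) ?_)
  · have hinj := w.injective.ne (by omega : j ≠ j + 1)
    rcases apply_cases_of_mem_permIcc hw j with hj | hj | hj <;>
      rcases apply_cases_of_mem_permIcc hw (j + 1) with hj1 | hj1 | hj1
    all_goals first
      | omega
      | (have := hno j (by omega) (by omega); omega)
  · exact apply_eq_self_of_mem_permIcc hw (by omega)

lemma nInv_list_prod_le_length (l : List (Perm ℤ)) (hl : ∀ s ∈ l, s ∈ AGens 1 n) :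
    nInv l.prod ≤ l.length := by
  induction l using List.reverseRecOn with
  | nil => simp [nInv_one]
  | append_singleton l s ih =>
    obtain ⟨i, -, -, rfl⟩ := hl s (by simp)
    have hl' : ∀ s ∈ l, s ∈ AGens 1 n := fun s hs => hl s (by simp [hs])
    have hprod : l.prod ∈ permIcc n :=
      (permIcc n).list_prod_mem fun s hs => AGens_subset_permIcc (hl' s hs)
    have := nInv_mul_swap_add_one_le (j := i) (invSet_finite hprod)
    have := ih hl'
    simp only [List.prod_append, List.prod_singleton, List.length_append, List.length_singleton]
    omega

lemma exists_list_prod_eq (hw : w ∈ permIcc n) :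
    ∃ l : List (Perm ℤ), l.length = nInv w ∧ (∀ s ∈ l, s ∈ AGens 1 n) ∧ l.prod = w := by
  induction hm : nInv w using Nat.strong_induction_on generalizing w with
  | _ m ih =>
    by_cases hone : w = 1
    · subst hone
      exact ⟨[], by simp [← hm, nInv_one], by simp, rfl⟩
    obtain ⟨j, hj1, hjn, hdesc⟩ := exists_descent hw hone
    have hws : w * swap j (j + 1) ∈ permIcc n :=
      mul_mem hw (swap_mem_permIcc ⟨hj1, by omega⟩ ⟨by omega, by omega⟩)
    have hlen := nInv_mul_swap_add_one_of_gt (invSet_finite hw) hdesc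
    obtain ⟨l, hl, hmem, hprod⟩ := ih _ (by omega) hws rfl
    refine ⟨l ++ [swap j (j + 1)], by rw [List.length_append, List.length_singleton, hl]; omega,
      fun s hs => ?_, by rw [List.prod_append, List.prod_singleton, hprod, mul_swap_mul_self]⟩
    rcases List.mem_append.1 hs with hs | hs
    · exact hmem s hs
    · rw [List.mem_singleton.1 hs]
      exact swap_add_one_mem_AGens hj1 hjn

lemma wlen_AGens_eq_nInv (hw : w ∈ permIcc n) : wlen (AGens 1 n) w = nInv w := by
  obtain ⟨l, hl, hmem, hprod⟩ := exists_list_prod_eq hw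
  refine le_antisymm (Nat.sInf_le ⟨l, hl, hmem, hprod⟩) (le_csInf ⟨_, l, hl, hmem, hprod⟩ ?_)
  rintro _ ⟨l', rfl, hmem', rfl⟩
  exact nInv_list_prod_le_length l' hmem'

lemma swap_eq_conj_of_mem_AGens {a b : ℤ} (ha : 1 ≤ a) (hab : a < b) (hb : b ≤ n) :
    ∃ g ∈ Subgroup.closure (AGens 1 n), ∃ s ∈ AGens 1 n, swap a b = g * s * g⁻¹ := by
  induction b, hab using Int.leInduction with
  | base => exact ⟨1, one_mem _, _, swap_add_one_mem_AGens ha (by omega), by group⟩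
  | succ c hac ih =>
    obtain ⟨g, hg, s, hs, hgs⟩ := ih (by omega)
    have ht := swap_add_one_mem_AGens (n := n) (by omega : 1 ≤ c) (by omega)
    refine ⟨swap c (c + 1) * g, mul_mem (Subgroup.subset_closure ht) hg, s, hs, ?_⟩
    rw [swap_eq_conj_swap (by omega), hgs, mul_inv_rev, swap_inv]
    group

lemma bruhatLe_mul_swap (hw : w ∈ permIcc n) {a b : ℤ} (ha : 1 ≤ a) (hab : a < b) (hb : b ≤ n)
    (h : w a < w b) : bruhatLe (AGens 1 n) w (w * swap a b) := by
  obtain ⟨g, hg, s, hs, hgs⟩ := swap_eq_conj_of_mem_AGens ha hab hb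
  have hws : w * swap a b ∈ permIcc n :=
    mul_mem hw (swap_mem_permIcc ⟨ha, by omega⟩ ⟨by omega, hb⟩)
  refine Relation.ReflTransGen.single ⟨⟨g, hg, s, hs, by rw [hgs]⟩, ?_⟩
  rw [wlen_AGens_eq_nInv hw, wlen_AGens_eq_nInv hws]
  simpa using nInv_mul_swap_lt hws ha hab hb (by simpa using h)

lemma card_filter_apply_mem_le (w : Perm ℤ) (s t : Finset ℤ) : #{a ∈ s | w a ∈ t} ≤ #t :=
  card_le_card_of_injOn w (fun _ ha => (mem_filter.1 ha).2) w.injective.injOn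

lemma rA_eq_card (P Q : ℤ) (w : Perm ℤ) : rA P Q w = #{a ∈ Ioc 0 P | Q < w a} := by
  rw [rA, ← Set.ncard_coe_finset]
  congr 2
  ext a
  simp only [coe_filter, mem_Ioc, Set.mem_ofPred_eq]
  omega

lemma rA_eq_sum (P Q : ℤ) (w : Perm ℤ) :
    rA P Q w = ∑ a ∈ Ioc 0 P, if Q < w a then 1 else 0 := by
  rw [rA_eq_card, card_filter]
  push_cast
  rfl

section Rank

variable {P Q : ℤ}

lemma rA_sub_one_add (hP : 0 < P) :
    rA (P - 1) Q w + (if Q < w P then 1 else 0) = rA P Q w := by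
  have : Ioc 0 P = insert P (Ioc 0 (P - 1)) := by
    ext a
    simp only [mem_insert, mem_Ioc]
    omega
  rw [rA_eq_sum, rA_eq_sum, this, sum_insert (by simp), add_comm]

lemma rA_congr {u v : Perm ℤ} (h : ∀ a, 0 < a → a ≤ P → u a = v a) : rA P Q u = rA P Q v := by
  simp only [rA_eq_sum]
  refine sum_congr rfl fun a ha => ?_
  rw [h a (mem_Ioc.1 ha).1 (mem_Ioc.1 ha).2]

variable {a b : ℤ}

lemma rA_mul_swap_of_not_mem (ha : 1 ≤ a) (hab : a < b) (hP : P < a ∨ b ≤ P) :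
    rA P Q (w * swap a b) = rA P Q w := by
  simp only [rA_eq_sum, Perm.mul_apply]
  rcases hP with hP | hP
  · refine sum_congr rfl fun x hx => ?_
    rw [mem_Ioc] at hx
    simp only [swap_apply_of_ne_of_ne (by omega : x ≠ a) (by omega : x ≠ b)]
  · refine (swap a b).sum_comp _ (fun x => if Q < w x then 1 else 0) fun x hx => ?_
    have : x = a ∨ x = b := by
      by_contra! hne
      exact hx (swap_apply_of_ne_of_ne hne.1 hne.2)
    rw [mem_coe, mem_Ioc]
    omega

lemma rA_mul_swap_of_mem (ha : 1 ≤ a) (haP : a ≤ P) (hPb : P < b) :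
    rA P Q (w * swap a b) + (if Q < w a then 1 else 0) =
      rA P Q w + (if Q < w b then 1 else 0) := by
  have hmem : a ∈ Ioc 0 P := mem_Ioc.2 ⟨by omega, haP⟩
  have hrest : ∑ x ∈ (Ioc 0 P).erase a, (if Q < (w * swap a b) x then 1 else 0 : ℤ) =
      ∑ x ∈ (Ioc 0 P).erase a, if Q < w x then 1 else 0 := by
    refine sum_congr rfl fun x hx => ?_
    rw [mem_erase, mem_Ioc] at hx
    simp only [Perm.mul_apply, swap_apply_of_ne_of_ne hx.1 (by omega : x ≠ b)]
  rw [rA_eq_sum, rA_eq_sum, ← add_sum_erase _ _ hmem, ← add_sum_erase _ _ hmem, hrest]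
  simp only [Perm.mul_apply, swap_apply_left]
  ring

lemma rA_le_rA_mul_swap (ha : 1 ≤ a) (hab : a < b) (h : w a < w b) :
    rA P Q w ≤ rA P Q (w * swap a b) := by
  by_cases hP : a ≤ P ∧ P < b
  · have := rA_mul_swap_of_mem (Q := Q) (w := w) ha hP.1 hP.2
    split_ifs at this <;> omega
  · rw [rA_mul_swap_of_not_mem ha hab (by omega)]

end Rank

lemma rA_le_rA_add_left (P P' Q : ℤ) (w : Perm ℤ) : rA P Q w ≤ rA P' Q w + max 0 (P - P') := by
  have hsub : {a ∈ Ioc 0 P | Q < w a} ⊆ {a ∈ Ioc 0 P' | Q < w a} ∪ Ioc P' P := by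
    intro a
    simp only [mem_filter, mem_union, mem_Ioc]
    omega
  have := (card_le_card hsub).trans (card_union_le _ _)
  rw [Int.card_Ioc] at this
  rw [rA_eq_card, rA_eq_card]
  omega

lemma rA_le_rA_add_right (P Q Q' : ℤ) (w : Perm ℤ) : rA P Q w ≤ rA P Q' w + max 0 (Q' - Q) := by
  have hsub : {a ∈ Ioc 0 P | Q < w a} ⊆
      {a ∈ Ioc 0 P | Q' < w a} ∪ {a ∈ Ioc 0 P | w a ∈ Ioc Q Q'} := by
    intro a
    simp only [mem_filter, mem_union, mem_Ioc]
    omega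
  have := (card_le_card hsub).trans ((card_union_le _ _).trans
    (Nat.add_le_add_left (card_filter_apply_mem_le w _ _) _))
  rw [Int.card_Ioc] at this
  rw [rA_eq_card, rA_eq_card]
  omega

lemma sub_le_rA (P Q : ℤ) (hw : ∀ a, 0 < a → 0 < w a) : P - max 0 Q ≤ rA P Q w := by
  have hsub : Ioc 0 P ⊆ {a ∈ Ioc 0 P | Q < w a} ∪ {a ∈ Ioc 0 P | w a ∈ Ioc 0 Q} := by
    intro a ha
    have := hw a (mem_Ioc.1 ha).1
    simp only [mem_filter, mem_union, mem_Ioc] at ha ⊢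
    omega
  have := (card_le_card hsub).trans ((card_union_le _ _).trans
    (Nat.add_le_add_left (card_filter_apply_mem_le w _ _) _))
  rw [Int.card_Ioc, Int.card_Ioc] at this
  rw [rA_eq_card]
  omega

section Criterion

variable {u v : Perm ℤ}

lemma conj_swap_eq_swap {g : Perm ℤ} (hg : g ∈ permIcc n) {i : ℤ} (hi : 1 ≤ i) (hin : i < n) :
    ∃ a b, 1 ≤ a ∧ a < b ∧ b ≤ n ∧ g * swap i (i + 1) * g⁻¹ = swap a b := by
  rw [← swap_apply_apply]
  have hne := g.injective.ne (by omega : i ≠ i + 1)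
  have hgi := apply_cases_of_mem_permIcc hg i
  have hgi1 := apply_cases_of_mem_permIcc hg (i + 1)
  rcases lt_or_gt_of_ne hne with h | h
  · exact ⟨g i, g (i + 1), by omega, h, by omega, rfl⟩
  · exact ⟨g (i + 1), g i, by omega, h, by omega, swap_comm _ _⟩

theorem rA_le_of_bruhatLe (h : bruhatLe (AGens 1 n) u v) (hu : u ∈ permIcc n) :
    v ∈ permIcc n ∧ ∀ P Q, rA P Q u ≤ rA P Q v := by
  induction h with
  | refl => exact ⟨hu, fun _ _ => le_rfl⟩
  | @tail x _ _ hstep ih =>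
    obtain ⟨hx, hrank⟩ := ih
    obtain ⟨⟨g, hg, _, ⟨i, hi, hin, rfl⟩, rfl⟩, hlen⟩ := hstep
    obtain ⟨a, b, ha, hab, hb, hswap⟩ :=
      conj_swap_eq_swap ((Subgroup.closure_le _).2 AGens_subset_permIcc hg) hi hin
    rw [hswap] at hlen ⊢
    have hxs : x * swap a b ∈ permIcc n :=
      mul_mem hx (swap_mem_permIcc ⟨ha, by omega⟩ ⟨by omega, hb⟩)
    rw [wlen_AGens_eq_nInv hx, wlen_AGens_eq_nInv hxs] at hlen
    have hxab : x a < x b := by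
      by_contra! hba
      have := nInv_mul_swap_lt hx ha hab hb (lt_of_le_of_ne hba (x.injective.ne hab.ne'))
      omega
    exact ⟨hxs, fun P Q => (hrank P Q).trans (rA_le_rA_mul_swap ha hab hxab)⟩

lemma exists_first_ne (hu : u ∈ permIcc n) (hv : v ∈ permIcc n) (huv : u ≠ v) :
    ∃ i, 0 < i ∧ i ≤ n ∧ u i ≠ v i ∧ ∀ a < i, u a = v a := by
  have hout : ∀ a, a < 1 ∨ n < a → u a = v a := fun a ha => by
    rw [apply_eq_self_of_mem_permIcc hu ha, apply_eq_self_of_mem_permIcc hv ha]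
  obtain ⟨i, hne, hmin⟩ := Int.exists_least_of_bdd (P := fun a => u a ≠ v a)
    ⟨1, fun a ha => by by_contra; exact ha (hout a (by omega))⟩
    (by by_contra! h; exact huv (Equiv.ext h))
  refine ⟨i, ?_, ?_, hne, fun a ha => by by_contra h; exact absurd (hmin a h) (by omega)⟩ <;>
    by_contra <;> exact hne (hout i (by omega))

lemma lt_of_rA_le {i : ℤ} (hi : 0 < i) (hpre : ∀ a < i, u a = v a) (hne : u i ≠ v i)
    (h : rA i (u i - 1) u ≤ rA i (u i - 1) v) : u i < v i := by
  rw [← rA_sub_one_add hi, ← rA_sub_one_add hi,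
    rA_congr (v := v) fun a _ ha => hpre a (by omega)] at h
  split_ifs at h <;> omega

lemma exists_least_swap_partner {i : ℤ} (hpre : ∀ a < i, u a = v a) (hlt : u i < v i) :
    ∃ j, i < j ∧ u i ≤ v j ∧ v j < v i ∧ ∀ a, i < a → a < j → ¬(u i ≤ v a ∧ v a < v i) := by
  have hpartner : v (v.symm (u i)) = u i := v.apply_symm_apply _
  have hlate : i < v.symm (u i) := by
    by_contra! h
    rcases h.lt_or_eq with h | h
    · have hu := hpre _ h
      rw [hpartner] at hu
      exact h.ne (u.injective hu)
    · rw [h] at hpartner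
      exact hlt.ne' hpartner
  obtain ⟨j, ⟨hij, huj, hji⟩, hmin⟩ :=
    Int.exists_least_of_bdd (P := fun a => i < a ∧ u i ≤ v a ∧ v a < v i)
      ⟨i, fun a ha => ha.1.le⟩ ⟨v.symm (u i), hlate, hpartner.ge, by omega⟩
  exact ⟨j, hij, huj, hji, fun a ha haj hva => absurd (hmin a ⟨ha, hva⟩) (by omega)⟩

lemma rA_add_one_le_of_gap {i P Q : ℤ} (hi : 0 < i) (hiP : i ≤ P)
    (hpre : ∀ a < i, u a = v a) (huQ : u i ≤ Q) (hQv : Q < v i)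
    (hgap : ∀ a, i < a → a ≤ P → ¬(u i ≤ v a ∧ v a ≤ Q))
    (h : rA P (u i - 1) u ≤ rA P (u i - 1) v) : rA P Q u + 1 ≤ rA P Q v := by
  -- termwise: `u = v` before `i`, position `i` supplies the `+ 1`, and after `i` no value
  -- of `v` lies in `[u i, Q]`
  have hterm : ∀ a ∈ Ioc 0 P,
      ((if Q < u a then 1 else 0) + (if a = i then 1 else 0) : ℤ) ≤
        (if u i - 1 < u a then 1 else 0) - (if u i - 1 < v a then 1 else 0) +
          (if Q < v a then 1 else 0) := by
    intro a ha
    rcases lt_trichotomy a i with hai | rfl | hai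
    · rw [hpre a hai]
      split_ifs <;> omega
    · split_ifs <;> omega
    · have := hgap a hai (mem_Ioc.1 ha).2
      split_ifs <;> omega
  have hsum := sum_le_sum hterm
  rw [sum_add_distrib, sum_ite_eq', if_pos (mem_Ioc.2 ⟨hi, hiP⟩), sum_add_distrib,
    sum_sub_distrib] at hsum
  simp only [← rA_eq_sum] at hsum
  omega

lemma rA_le_rA_mul_swap_of_gap {i j : ℤ} (hi : 0 < i) (hij : i < j)
    (hpre : ∀ a < i, u a = v a) (huj : u i ≤ v j)
    (hgap : ∀ a, i < a → a < j → ¬(u i ≤ v a ∧ v a < v i))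
    (h : ∀ P Q, rA P Q u ≤ rA P Q v) (P Q : ℤ) : rA P Q u ≤ rA P Q (v * swap i j) := by
  by_cases hP : i ≤ P ∧ P < j
  · have hswap := rA_mul_swap_of_mem (Q := Q) (w := v) hi hP.1 hP.2
    by_cases hQ : v j ≤ Q ∧ Q < v i
    · have := rA_add_one_le_of_gap hi hP.1 hpre (by omega) hQ.2
        (fun a ha haP hva => hgap a ha (by omega) ⟨hva.1, by omega⟩) (h P (u i - 1))
      split_ifs at hswap <;> omega
    · have := h P Q
      split_ifs at hswap <;> omega
  · rw [rA_mul_swap_of_not_mem hi hij (by omega)]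
    exact h P Q

theorem bruhatLe_of_forall_rA_le (hu : u ∈ permIcc n) (hv : v ∈ permIcc n)
    (h : ∀ P Q, rA P Q u ≤ rA P Q v) : bruhatLe (AGens 1 n) u v := by
  induction hm : nInv v using Nat.strong_induction_on generalizing v with
  | _ m ih =>
    by_cases huv : u = v
    · exact huv ▸ Relation.ReflTransGen.refl
    obtain ⟨i, hi, hin, hne, hpre⟩ := exists_first_ne hu hv huv
    have hlt := lt_of_rA_le hi hpre hne (h i (u i - 1))
    obtain ⟨j, hij, huj, hji, hgap⟩ := exists_least_swap_partner hpre hlt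
    have hjn : j ≤ n := by
      rcases apply_cases_of_mem_permIcc hv i with hvi | hvi | hvi <;>
        rcases apply_cases_of_mem_permIcc hv j with hvj | hvj | hvj <;> omega
    have hv' : v * swap i j ∈ permIcc n :=
      mul_mem hv (swap_mem_permIcc ⟨hi, hin⟩ ⟨by omega, hjn⟩)
    have hstep := bruhatLe_mul_swap hv' hi hij hjn (by simpa using hji)
    rw [mul_swap_mul_self] at hstep
    exact (ih _ (hm ▸ nInv_mul_swap_lt hv hi hij hjn hji) hv'
      (rA_le_rA_mul_swap_of_gap hi hij hpre huj hgap h) rfl).trans hstep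

theorem bruhatLe_iff_forall_rA_le (hu : u ∈ permIcc n) (hv : v ∈ permIcc n) :
    bruhatLe (AGens 1 n) u v ↔ ∀ P Q, rA P Q u ≤ rA P Q v :=
  ⟨fun h => (rA_le_of_bruhatLe h hu).2, bruhatLe_of_forall_rA_le hu hv⟩

end Criterion

section Basic

variable {k p q : ℤ} {v : Perm ℤ}

lemma vAfun_mem_permIcc (hkp : k ≤ p) (hkq : p - q < k) (hn : q + k ≤ n)
    (hv : ∀ i, v i = vAfun k p q i) : v ∈ permIcc n :=
  (mem_fixingSubgroup_iff (Perm ℤ)).2 fun m hm => by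
    simp only [Set.mem_compl_iff, Set.mem_Icc] at hm
    rw [Perm.smul_def, hv]
    unfold vAfun
    split_ifs <;> omega

lemma card_filter_Ioc (A B C D : ℤ) :
    #{a ∈ Ioc A B | C < a ∧ a ≤ D} = (min B D - max A C).toNat := by
  rw [← Int.card_Ioc]
  congr 1
  ext a
  simp only [mem_filter, mem_Ioc]
  omega

lemma rA_vAfun (hk : 0 < k) (hkq : p - q < k) (hv : ∀ i, v i = vAfun k p q i) (P Q : ℤ) :
    rA P Q v = ((min P (p - k) - max 0 Q).toNat : ℤ) +
      (min P p - max 0 (max (p - k) (Q - q + p - k))).toNat +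
      (min P (q + k) - max 0 (max p (Q + k))).toNat + (P - max 0 (max (q + k) Q)).toNat := by
  -- one indicator for each of the four runs of the one-line notation
  have hsplit : ∀ a ∈ Ioc 0 P, (if Q < v a then 1 else 0 : ℤ) =
      (if Q < a ∧ a ≤ p - k then 1 else 0) +
      (if max (p - k) (Q - q + p - k) < a ∧ a ≤ p then 1 else 0) +
      (if max p (Q + k) < a ∧ a ≤ q + k then 1 else 0) +
      (if max (q + k) Q < a ∧ a ≤ P then 1 else 0) := by
    intro a ha
    rw [mem_Ioc] at ha
    rw [hv]
    unfold vAfun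
    split_ifs <;> omega
  rw [rA_eq_sum, sum_congr rfl hsplit]
  simp only [sum_add_distrib, sum_boole, card_filter_Ioc, min_self]

lemma rA_vAfun_self (hk : 0 < k) (hkp : k ≤ p) (hkq : p - q < k) (hv : ∀ i, v i = vAfun k p q i) :
    rA p q v = k := by
  rw [rA_vAfun hk hkq hv]
  omega

lemma rA_vAfun_le (hk : 0 < k) (hkq : p - q < k) (hv : ∀ i, v i = vAfun k p q i) {w : Perm ℤ}
    (hw : ∀ a, 0 < a → 0 < w a) (h : k ≤ rA p q w) (P Q : ℤ) : rA P Q v ≤ rA P Q w := by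
  have h1 := sub_le_rA P Q hw
  have h2 := rA_le_rA_add_right p q Q w
  have h3 := rA_le_rA_add_left p P Q w
  have h4 : (0 : ℤ) ≤ rA P Q w := Nat.cast_nonneg _
  rw [rA_vAfun hk hkq hv]
  omega

end Basic

end BruhatA

theorem stmt13_general (n k p q k' p' q' : ℤ)
    (hk : 0 < k) (hkp : k ≤ p) (hkq : p - q < k)
    (hkp' : k' ≤ p') (hkq' : p' - q' < k')
    (hn : q + k ≤ n) (hn' : q' + k' ≤ n)
    (v0 v1 : Equiv.Perm ℤ)
    (hv0 : ∀ i : ℤ, v0 i = vAfun k p q i) (hv1 : ∀ i : ℤ, v1 i = vAfun k' p' q' i) :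
    bruhatLe (AGens 1 n) v0 v1 ↔ k ≤ rA p q v1 := by
  open BruhatA in
  have hv0n := vAfun_mem_permIcc hkp hkq hn hv0
  have hv1n := vAfun_mem_permIcc hkp' hkq' hn' hv1
  rw [bruhatLe_iff_forall_rA_le hv0n hv1n]
  exact ⟨fun h => rA_vAfun_self hk hkp hkq hv0 ▸ h p q,
    rA_vAfun_le hk hkq hv0 fun _ => apply_pos_of_mem_permIcc hv1n⟩

theorem stmt13 (n k p q k' p' q' : ℤ)
    (hk : 0 < k) (hp : 0 < p) (hq : 0 < q) (hkp : k ≤ p) (hkq : p - q < k)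
    (hk' : 0 < k') (hp' : 0 < p') (hq' : 0 < q') (hkp' : k' ≤ p') (hkq' : p' - q' < k')
    (hn : q + k ≤ n) (hn' : q' + k' ≤ n)
    (v0 v1 : Equiv.Perm ℤ)
    (hv0 : ∀ i : ℤ, v0 i = vAfun k p q i) (hv1 : ∀ i : ℤ, v1 i = vAfun k' p' q' i) :
    bruhatLe (AGens 1 n) v0 v1 ↔ k ≤ rA p q v1 :=
  stmt13_general n k p q k' p' q' hk hkp hkq hkp' hkq' hn hn' v0 v1 hv0 hv1
end

section
/- In type B: for a basic triple (k,p,q) with q > 0, the basic signed permutation w(k,p,q) satisfies w(k,p,q)⁻¹ = w(k,q,p); for q < 0, it satisfies w(k,p,q)⁻¹ = w(p+q+k-1, 1-q, 1-p). -/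
/-
Inversion `w ↦ w⁻¹` preserves signedness, finite support and the word length (the generators
are involutions), so it maps a Bruhat-minimum of one admissible set onto the Bruhat-minimum of
the image set. It remains to compute the image of `{w | k ≤ r_w(p,q)}`. Substituting
`i = -w⁻¹(j)` gives `r_{w⁻¹}(q,p) = r_w(p,q)` for signed `w`. For `q < 0`, counting inside a
window `[-N, N]` beyond which `w` is the identity gives
`r_w(1-q, 1-p) = p + q - 1 + r_{w⁻¹}(p,q)`, since `w` matches `{i ≥ 1-q | w i ≥ p}` with
`{j ≥ p | w⁻¹ j ≥ 1-q}` and the two windows differ in length by `p + q - 1`.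
-/

theorem IsSigned.inv {w : Equiv.Perm ℤ} (h : IsSigned w) : IsSigned w⁻¹ :=
  fun i => (Equiv.symm_apply_eq w).mpr (by rw [h]; simp)

namespace FixesBeyond

variable {N : ℤ} {w : Equiv.Perm ℤ}

theorem inv (h : FixesBeyond N w) : FixesBeyond N w⁻¹ :=
  fun m hm => (Equiv.symm_apply_eq w).mpr (h m hm).symm

theorem mono (h : FixesBeyond N w) {N' : ℤ} (hle : N ≤ N') : FixesBeyond N' w :=
  fun m hm => h m (hle.trans_lt hm)

theorem abs_apply_le (h : FixesBeyond N w) {m : ℤ} (hm : |m| ≤ N) : |w m| ≤ N := by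
  by_contra! hlt
  have hfix : w m = m := w.injective (h (w m) hlt)
  rw [hfix] at hlt
  omega

theorem card_filter_lt_sub_card_filter_inv_lt (h : FixesBeyond N w) {a b : ℤ}
    (ha : |a| ≤ N) (hb : |b| ≤ N) :
    (((Finset.Icc a N).filter (w · < b)).card : ℤ) -
      ((Finset.Icc b N).filter (w⁻¹ · < a)).card = b - a := by
  have := abs_le.mp ha
  have := abs_le.mp hb
  have hmatch : ((Finset.Icc a N).filter (b ≤ w ·)).map w.toEmbedding =
      (Finset.Icc b N).filter (a ≤ w⁻¹ ·) := by
    ext j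
    simp only [Finset.mem_map, Finset.mem_filter, Finset.mem_Icc, Equiv.toEmbedding_apply]
    constructor
    · rintro ⟨i, ⟨⟨hai, hiN⟩, hbi⟩, rfl⟩
      have := abs_le.mp (h.abs_apply_le (abs_le.mpr ⟨by omega, hiN⟩))
      exact ⟨⟨hbi, this.2⟩, by simpa using hai⟩
    · rintro ⟨⟨hbj, hjN⟩, haj⟩
      have := abs_le.mp (h.inv.abs_apply_le (abs_le.mpr ⟨by omega, hjN⟩))
      exact ⟨w⁻¹ j, ⟨⟨haj, this.2⟩, by simpa using hbj⟩, by simp⟩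
  have hsplit_a := Finset.card_filter_add_card_filter_not (s := Finset.Icc a N) (w · < b)
  have hsplit_b := Finset.card_filter_add_card_filter_not (s := Finset.Icc b N) (w⁻¹ · < a)
  have hcard := congrArg Finset.card hmatch
  simp only [Finset.card_map, not_lt] at hsplit_a hsplit_b hcard
  rw [Int.card_Icc] at hsplit_a hsplit_b
  omega

end FixesBeyond

theorem rB_eq_card_filter_Icc {N : ℤ} {w : Equiv.Perm ℤ} (h : FixesBeyond N w) {p q : ℤ}
    (hq : -q ≤ N) : rB p q w = ((Finset.Icc p N).filter (w · < 1 - q)).card := by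
  rw [rB, ← Set.ncard_coe_finset]
  congr 2
  ext i
  simp only [Set.mem_ofPred_eq, Finset.coe_filter, Finset.mem_Icc]
  refine ⟨fun ⟨hpi, hwi⟩ => ⟨⟨hpi, ?_⟩, by omega⟩, fun ⟨⟨hpi, _⟩, hwi⟩ => ⟨hpi, by omega⟩⟩
  by_contra! hNi
  have := h i (hNi.trans_le (le_abs_self i))
  omega

theorem rB_inv {w : Equiv.Perm ℤ} (hw : IsSigned w) (p q : ℤ) : rB q p w⁻¹ = rB p q w := by
  have himage : (fun i => -w i) '' {i | p ≤ i ∧ w i ≤ -q} = {j | q ≤ j ∧ w⁻¹ j ≤ -p} := by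
    ext j
    constructor
    · rintro ⟨i, ⟨hpi, hwi⟩, rfl⟩
      have : w⁻¹ (-w i) = -i := (Equiv.symm_apply_eq w).mpr (hw i).symm
      exact ⟨by dsimp only; omega, by dsimp only; rw [this]; omega⟩
    · rintro ⟨hqj, hj⟩
      have hwj : w (-w⁻¹ j) = -j := by rw [hw]; simp
      exact ⟨-w⁻¹ j, ⟨by omega, by omega⟩, by simp only [hwj, neg_neg]⟩
  rw [rB, rB, ← himage, Set.ncard_image_of_injective _ fun _ _ h => w.injective (neg_injective h)]

theorem rB_one_sub_one_sub {w : Equiv.Perm ℤ} (hw : ∃ N, FixesBeyond N w) (p q : ℤ) :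
    rB (1 - q) (1 - p) w = p + q - 1 + rB p q w⁻¹ := by
  obtain ⟨N₀, hN₀⟩ := hw
  have hN := hN₀.mono (le_max_left N₀ (|p| + |q| + 1))
  set N := max N₀ (|p| + |q| + 1)
  have hpN : |p| ≤ N := by have := abs_nonneg q; omega
  have hqN : |1 - q| ≤ N := (abs_sub _ _).trans (by have := abs_nonneg p; simp; omega)
  have hcount := hN.card_filter_lt_sub_card_filter_inv_lt hqN hpN
  rw [rB_eq_card_filter_Icc hN (by grind), rB_eq_card_filter_Icc hN.inv (by grind), sub_sub_cancel]
  omega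

section Bruhat

variable {S : Set (Equiv.Perm ℤ)}

theorem wlen_inv (hS : ∀ s ∈ S, s⁻¹ ∈ S) (g : Equiv.Perm ℤ) : wlen S g⁻¹ = wlen S g := by
  have hwords : ∀ h : Equiv.Perm ℤ,
      {m | ∃ l : List (Equiv.Perm ℤ), l.length = m ∧ (∀ x ∈ l, x ∈ S) ∧ l.prod = h} ⊆
      {m | ∃ l : List (Equiv.Perm ℤ), l.length = m ∧ (∀ x ∈ l, x ∈ S) ∧ l.prod = h⁻¹} := by
    rintro h m ⟨l, rfl, hmem, rfl⟩
    refine ⟨(l.map (·⁻¹)).reverse, by simp, ?_, by simp [List.prod_inv_reverse]⟩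
    simp only [List.mem_reverse, List.mem_map]
    rintro _ ⟨y, hy, rfl⟩
    exact hS y (hmem y hy)
  unfold wlen
  congr 1
  exact (hwords g).antisymm' (by simpa using hwords g⁻¹)

theorem bruhatLe.wlen_le {u v : Equiv.Perm ℤ} (h : bruhatLe S u v) : wlen S u ≤ wlen S v := by
  induction h with
  | refl => exact le_rfl
  | tail _ hstep ih => exact ih.trans hstep.2.le

theorem bruhatLe.eq_of_wlen_le {u v : Equiv.Perm ℤ} (h : bruhatLe S u v)
    (hlen : wlen S v ≤ wlen S u) : u = v := by
  rcases Relation.ReflTransGen.cases_tail h with rfl | ⟨x, hux, hxv⟩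
  · rfl
  · exact absurd ((hlen.trans (bruhatLe.wlen_le hux)).trans_lt hxv.2) (lt_irrefl _)

theorem inv_eq_of_bruhatLe_inv (hS : ∀ s ∈ S, s⁻¹ ∈ S) {u v : Equiv.Perm ℤ}
    (huv : bruhatLe S u v⁻¹) (hvu : bruhatLe S v u⁻¹) : u⁻¹ = v := by
  have hlen : wlen S v⁻¹ ≤ wlen S u := by
    simpa only [wlen_inv hS] using hvu.wlen_le
  rw [huv.eq_of_wlen_le hlen, inv_inv]

end Bruhat

theorem inv_mem_BGensInf {s : Equiv.Perm ℤ} (hs : s ∈ BGensInf) : s⁻¹ ∈ BGensInf := by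
  rcases hs with rfl | ⟨i, hi, rfl⟩
  · exact Or.inl (Equiv.swap_inv _ _)
  · refine Or.inr ⟨i, hi, ?_⟩
    rw [mul_inv_rev, Equiv.swap_inv, Equiv.swap_inv]
    exact ((Equiv.Perm.disjoint_swap_swap (by simp; omega)).commute).eq.symm

theorem IsMinB.inv_eq {k p q k' p' q' : ℤ} {u v : Equiv.Perm ℤ} (hu : IsMinB k p q u)
    (hv : IsMinB k' p' q' v)
    (hrank : ∀ w, IsSigned w → (∃ N, FixesBeyond N w) → (k ≤ rB p q w ↔ k' ≤ rB p' q' w⁻¹)) :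
    u⁻¹ = v := by
  obtain ⟨hu_signed, ⟨Nu, hNu⟩, hu_rank, hu_min⟩ := hu
  obtain ⟨hv_signed, ⟨Nv, hNv⟩, hv_rank, hv_min⟩ := hv
  refine inv_eq_of_bruhatLe_inv (fun _ => inv_mem_BGensInf) ?_ ?_
  · refine hu_min _ hv_signed.inv ⟨Nv, hNv.inv⟩ ?_
    rw [hrank _ hv_signed.inv ⟨Nv, hNv.inv⟩, inv_inv]
    exact hv_rank
  · exact hv_min _ hu_signed.inv ⟨Nu, hNu.inv⟩ ((hrank _ hu_signed ⟨Nu, hNu⟩).mp hu_rank)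

theorem stmt16_general (k p q : ℤ) (w0 w1 : Equiv.Perm ℤ)
    (h0 : IsMinB k p q w0) :
    (0 < q → IsMinB k q p w1 → w0⁻¹ = w1) ∧
    (q < 0 → IsMinB (p + q + k - 1) (1 - q) (1 - p) w1 → w0⁻¹ = w1) := by
  refine ⟨fun _ h1 => h0.inv_eq h1 fun w hw _ => ?_, fun _ h1 => h0.inv_eq h1 fun w _ hfin => ?_⟩
  · rw [rB_inv hw]
  · rw [rB_one_sub_one_sub (Exists.imp (fun _ => FixesBeyond.inv) hfin), inv_inv]
    omega

theorem stmt16 (k p q : ℤ) (hb : BasicB k p q) (w0 w1 : Equiv.Perm ℤ)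
    (h0 : IsMinB k p q w0) :
    (0 < q → IsMinB k q p w1 → w0⁻¹ = w1) ∧
    (q < 0 → IsMinB (p + q + k - 1) (1 - q) (1 - p) w1 → w0⁻¹ = w1) :=
  stmt16_general k p q w0 w1 h0
end
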